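/- arXiv:2501.12700 — 6 statements merged into one kernel-verified Lean document; each statement's English description precedes it below -/
import Mathlib

section
/- Fix A_i > 0, γ_i ∈ (0,1), S_i > 0 and R > 0, and consider agent i's problem: choose k ≥ 0 and b ∈ ℝ to maximize A_i·k − R·b subject to k ≤ S_i + b and R·b ≤ γ_i·A_i·k. Then: (1) if R ≤ γ_i·A_i, the problem has no solution (the supremum of the objective is +∞); (2) if γ_i·A_i < R < A_i, the unique solution is k = R·S_i/(R−γ_i·A_i) and b = γ_i·A_i·S_i/(R−γ_i·A_i), the borrowing constraint binds, and the optimal value is A_i·k − R·b = R·(1−γ_i)·A_i·S_i/(R−γ_i·A_i); (3) if R = A_i, the solution set is exactly the set of pairs (k, b) with −S_i ≤ b ≤ γ_i·S_i/(1−γ_i) and k = b + S_i; (4) if R > A_i, the unique solution is k = 0 and b = −S_i. -/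
/-- Feasibility for an agent with linear production `F k = A * k`. -/
def LinFeasible (A γ S R k b : ℝ) : Prop :=
  0 ≤ k ∧ k ≤ S + b ∧ R * b ≤ γ * (A * k)

/-- `(k, b)` solves the agent's profit-maximization problem given `R`. -/
def LinOptimal (A γ S R k b : ℝ) : Prop :=
  LinFeasible A γ S R k b ∧
    ∀ k' b', LinFeasible A γ S R k' b' → A * k' - R * b' ≤ A * k - R * b

/-!
Since `R ≥ 0`, an optimal agent never holds idle funds, so `b = k - S` and the profit is
`(A - R) * k + R * S`. When `R < A` the agent wants `k` as large as possible; the two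
constraints together give `(R - γ * A) * k ≤ R * S`, which caps `k` exactly when `γ * A < R`.
When `A < R` the agent wants `k = 0`, and when `A = R` every `k` that the borrowing constraint
allows is optimal.
-/

variable {A γ S R k b : ℝ}

theorem LinFeasible.profit_le (hR : 0 ≤ R) (h : LinFeasible A γ S R k b) :
    A * k - R * b ≤ (A - R) * k + R * S := by
  nlinarith [mul_le_mul_of_nonneg_left h.2.1 hR]

theorem LinFeasible.le_div_of_mul_lt (hR : 0 ≤ R) (hγA : γ * A < R)
    (h : LinFeasible A γ S R k b) : k ≤ R * S / (R - γ * A) := by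
  rw [le_div_iff₀ (sub_pos.2 hγA)]
  nlinarith [mul_le_mul_of_nonneg_left h.2.1 hR, h.2.2]

theorem linFeasible_zero_neg (hR : 0 ≤ R) (hS : 0 ≤ S) : LinFeasible A γ S R 0 (-S) :=
  ⟨le_rfl, by linarith, by nlinarith⟩

theorem exists_linFeasible_profit_gt (hR : 0 ≤ R) (hS : 0 ≤ S) (hRγ : R ≤ γ * A)
    (hRA : R < A) (M : ℝ) : ∃ k b, LinFeasible A γ S R k b ∧ M < A * k - R * b := by
  obtain ⟨n, hn⟩ := exists_nat_gt ((M - R * S) / (A - R))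
  have hk : (0 : ℝ) ≤ n := n.cast_nonneg
  rw [div_lt_iff₀ (sub_pos.2 hRA)] at hn
  refine ⟨n, n - S, ⟨hk, by linarith, ?_⟩, by linarith⟩
  nlinarith [mul_le_mul_of_nonneg_right hRγ hk]

theorem not_exists_linOptimal_of_unbounded
    (h : ∀ M, ∃ k b, LinFeasible A γ S R k b ∧ M < A * k - R * b) :
    ¬ ∃ k b, LinOptimal A γ S R k b := by
  rintro ⟨k, b, hopt⟩
  obtain ⟨k', b', hf, hlt⟩ := h (A * k - R * b)
  exact (hopt.2 k' b' hf).not_gt hlt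

theorem LinOptimal.iff_profit_eq {k₀ b₀ : ℝ} (h₀ : LinOptimal A γ S R k₀ b₀) :
    LinOptimal A γ S R k b ↔
      LinFeasible A γ S R k b ∧ A * k - R * b = A * k₀ - R * b₀ :=
  ⟨fun h => ⟨h.1, le_antisymm (h₀.2 k b h.1) (h.2 k₀ b₀ h₀.1)⟩,
    fun ⟨hf, he⟩ => ⟨hf, fun k' b' hf' => he ▸ h₀.2 k' b' hf'⟩⟩

theorem interior_borrowing_eq :
    R * (γ * A * S / (R - γ * A)) = γ * (A * (R * S / (R - γ * A))) := by
  ring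

theorem interior_profit_eq :
    A * (R * S / (R - γ * A)) - R * (γ * A * S / (R - γ * A)) =
      R * (1 - γ) * A * S / (R - γ * A) := by
  ring

section Interior

variable (hγA : γ * A < R) (hRA : R < A) (hR : 0 < R)
include hγA

theorem interior_budget_eq : S + γ * A * S / (R - γ * A) = R * S / (R - γ * A) := by
  field_simp [(sub_pos.2 hγA).ne']
  ring

include hRA hR

theorem linOptimal_interior (hS : 0 ≤ S) :
    LinOptimal A γ S R (R * S / (R - γ * A)) (γ * A * S / (R - γ * A)) := by
  have hD : 0 < R - γ * A := sub_pos.2 hγA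
  refine ⟨⟨by positivity, (interior_budget_eq hγA).ge, interior_borrowing_eq.le⟩, ?_⟩
  intro k b h
  have hk := h.le_div_of_mul_lt hR.le hγA
  have hprofit := h.profit_le hR.le
  rw [← interior_budget_eq hγA] at hk ⊢
  nlinarith

theorem linOptimal_iff_of_lt_of_lt (hS : 0 ≤ S) :
    LinOptimal A γ S R k b ↔
      k = R * S / (R - γ * A) ∧ b = γ * A * S / (R - γ * A) := by
  rw [(linOptimal_interior hγA hRA hR hS).iff_profit_eq]
  constructor
  · rintro ⟨h, he⟩
    have hk := h.le_div_of_mul_lt hR.le hγA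
    have hprofit := h.profit_le hR.le
    rw [← interior_budget_eq hγA] at he hk ⊢
    have hk' : k = S + γ * A * S / (R - γ * A) := by nlinarith
    subst hk'
    exact ⟨rfl, mul_left_cancel₀ hR.ne' (by linarith)⟩
  · rintro ⟨rfl, rfl⟩
    exact ⟨(linOptimal_interior hγA hRA hR hS).1, rfl⟩

end Interior

theorem linOptimal_zero_neg (hAR : A ≤ R) (hR : 0 ≤ R) (hS : 0 ≤ S) :
    LinOptimal A γ S R 0 (-S) :=
  ⟨linFeasible_zero_neg hR hS, fun _ _ h => by nlinarith [h.profit_le hR, h.1]⟩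

theorem linOptimal_same_rate_iff (hA : 0 < A) (hγ : γ < 1) (hS : 0 ≤ S) :
    LinOptimal A γ S A k b ↔ -S ≤ b ∧ b ≤ γ * S / (1 - γ) ∧ k = b + S := by
  have hborrow : b ≤ γ * S / (1 - γ) ↔ A * b ≤ γ * (A * (b + S)) := by
    rw [le_div_iff₀ (sub_pos.2 hγ), mul_left_comm, mul_le_mul_iff_right₀ hA]
    constructor <;> intro <;> linarith
  rw [(linOptimal_zero_neg le_rfl hA.le hS).iff_profit_eq, hborrow]
  constructor
  · rintro ⟨h, he⟩
    have hk : k = b + S := mul_left_cancel₀ hA.ne' (by linarith)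
    subst hk
    exact ⟨by linarith [h.1], h.2.2, rfl⟩
  · rintro ⟨hb, hbor, rfl⟩
    exact ⟨⟨by linarith, by linarith, hbor⟩, by ring⟩

theorem linOptimal_iff_of_lt (hAR : A < R) (hR : 0 < R) (hS : 0 ≤ S) :
    LinOptimal A γ S R k b ↔ k = 0 ∧ b = -S := by
  rw [(linOptimal_zero_neg hAR.le hR.le hS).iff_profit_eq]
  constructor
  · rintro ⟨h, he⟩
    have hk : k = 0 := le_antisymm (by nlinarith [h.profit_le hR.le]) h.1
    subst hk
    exact ⟨rfl, mul_left_cancel₀ hR.ne' (by linarith)⟩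
  · rintro ⟨rfl, rfl⟩
    exact ⟨linFeasible_zero_neg hR.le hS, rfl⟩

/-- complete solution of the individual problem with linear technology. -/
theorem stmt5 (A γ S R : ℝ) (hA : 0 < A) (hγ : γ ∈ Set.Ioo (0:ℝ) 1)
    (hS : 0 < S) (hR : 0 < R) :
    -- (1) if `R ≤ γA`, no solution: the supremum of the objective is `+∞`
    (R ≤ γ * A →
      (∀ M : ℝ, ∃ k b, LinFeasible A γ S R k b ∧ M < A * k - R * b) ∧
      ¬ ∃ k b, LinOptimal A γ S R k b) ∧
    -- (2) if `γA < R < A`, unique solution with binding borrowing constraint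
    (γ * A < R → R < A →
      (∀ k b, LinOptimal A γ S R k b ↔
        k = R * S / (R - γ * A) ∧ b = γ * A * S / (R - γ * A)) ∧
      R * (γ * A * S / (R - γ * A)) = γ * (A * (R * S / (R - γ * A))) ∧
      A * (R * S / (R - γ * A)) - R * (γ * A * S / (R - γ * A)) =
        R * (1 - γ) * A * S / (R - γ * A)) ∧
    -- (3) if `R = A`, the solution set is an interval of portfolios
    (R = A →
      ∀ k b, LinOptimal A γ S R k b ↔
        (-S ≤ b ∧ b ≤ γ * S / (1 - γ) ∧ k = b + S)) ∧
    -- (4) if `R > A`, the agent lends everything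
    (A < R → ∀ k b, LinOptimal A γ S R k b ↔ (k = 0 ∧ b = -S)) := by
  refine ⟨fun hRγ => ?_, fun hγA hRA => ?_, fun hRA => ?_, fun hAR => ?_⟩
  · have hRA : R < A := hRγ.trans_lt (mul_lt_of_lt_one_left hA hγ.2)
    have hunbounded := exists_linFeasible_profit_gt hR.le hS.le hRγ hRA
    exact ⟨hunbounded, not_exists_linOptimal_of_unbounded hunbounded⟩
  · exact ⟨fun k b => linOptimal_iff_of_lt_of_lt hγA hRA hR hS.le,
      interior_borrowing_eq, interior_profit_eq⟩
  · subst hRA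
    exact fun k b => linOptimal_same_rate_iff hR hγ.2 hS.le
  · exact fun k b => linOptimal_iff_of_lt hAR hR hS.le
end

section
/- Consider the static economy with linear production functions F_i(k) = A_i·k, A_1 < A_2 < ⋯ < A_m (all positive), γ_i ∈ (0,1), S_i > 0, S = Σ_i S_i. Then: (1) any equilibrium aggregate output satisfies Y ≤ A_m·S, with equality if and only if γ_m·A_m ≥ A_{m−1}·(1 − S_m/S). (2) If A_n > max_i γ_i·A_i and Σ_{i=n+1}^m A_n·S_i/(A_n−γ_i·A_i) ≤ S ≤ Σ_{i=n}^m A_n·S_i/(A_n−γ_i·A_i), then the equilibrium interest rate equals A_n and the aggregate output equals Y = A_n·Σ_{i=1}^n S_i + Σ_{i=n+1}^m A_n·(1−γ_i)·A_i·S_i/(A_n−γ_i·A_i); moreover, viewing this formula as a function of (A_1,…,A_m), ∂Y/∂A_j > 0 for every j > n, and ∂Y/∂A_n = Σ_{i=1}^n S_i − Σ_{i=n+1}^m (1−γ_i)·γ_i·S_i/((A_n/A_i − γ_i))². -/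
/-- Equilibrium of the static linear economy with `m` agents (indexed `0,…,m-1`). -/
def LinEquilibrium (m : ℕ) (A γ S : ℕ → ℝ) (R : ℝ) (k b : ℕ → ℝ) : Prop :=
  0 < R ∧ (∀ i < m, LinOptimal (A i) (γ i) (S i) R (k i) (b i)) ∧
    ∑ i ∈ Finset.range m, b i = 0

/-- `𝔻ₙ = Σ_{i ≥ n} Aₙ Sᵢ / (Aₙ - γᵢ Aᵢ)`. -/
noncomputable def Dn (m : ℕ) (A γ S : ℕ → ℝ) (n : ℕ) : ℝ :=
  ∑ i ∈ (Finset.range m).filter (fun i => n ≤ i), A n * S i / (A n - γ i * A i)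

/-- `𝔹ₙ = Σ_{i > n} Aₙ Sᵢ / (Aₙ - γᵢ Aᵢ)`. -/
noncomputable def Bn (m : ℕ) (A γ S : ℕ → ℝ) (n : ℕ) : ℝ :=
  ∑ i ∈ (Finset.range m).filter (fun i => n < i), A n * S i / (A n - γ i * A i)

/-- The aggregate output formula in the regime where the interest rate equals `aₙ`,
viewed as a function of the productivity vector `a`. -/
noncomputable def Yformula (m n : ℕ) (γ S : ℕ → ℝ) (a : ℕ → ℝ) : ℝ :=
  a n * (∑ i ∈ (Finset.range m).filter (fun i => i ≤ n), S i)
  + ∑ i ∈ (Finset.range m).filter (fun i => n < i),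
      a n * (1 - γ i) * a i * S i / (a n - γ i * a i)


/-!
An optimal plan always exhausts the budget, `k = S + b`, and its shape depends only on how `A`
compares with `R`: for `A < R` the agent lends everything, for `A = R` it is indifferent, and for
`R < A` its credit limit must bind (`γ A < R`) and it invests `R S / (R - γ A)`. So in equilibrium
the total capital `Σ k = Σ S` is held by the agents with `R ≤ A_i`, and `Y ≤ A_m S`, with equality
iff the most productive agent holds all of it, which its credit limit permits exactly under the
stated condition. In regime (2) the capital demand is strictly decreasing in `R`, with limits
`𝔻ₙ` as `R ↑ Aₙ` and `𝔹ₙ` as `R ↓ Aₙ`, which forces `R = Aₙ`; as borrowing nets out, `Y` is then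
the aggregate profit, which is differentiated termwise.
-/

open Finset

theorem mul_div_sub_lt_mul_div_sub {c s x y : ℝ} (hc : 0 < c) (hs : 0 < s) (hcx : c < x)
    (hxy : x < y) : y * s / (y - c) < x * s / (x - c) := by
  rw [div_lt_div_iff₀ (by linarith) (by linarith)]
  nlinarith [mul_pos (mul_pos hs hc) (sub_pos.2 hxy)]

/-- The profit `A k - R b` of an agent who borrows at the rate `R < A` up to its credit limit. -/
noncomputable def borrowerProfit (R γ A S : ℝ) : ℝ :=
  R * (1 - γ) * A * S / (R - γ * A)

theorem hasDerivAt_borrowerProfit_rate {γ A S R : ℝ} (hA : A ≠ 0) (hR : R - γ * A ≠ 0) :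
    HasDerivAt (fun x => borrowerProfit x γ A S) (-((1 - γ) * γ * S / (R / A - γ) ^ 2)) R := by
  have hnum := ((((hasDerivAt_id' R).mul_const (1 - γ)).mul_const A).mul_const S)
  refine (hnum.div ((hasDerivAt_id' R).sub_const (γ * A)) hR).congr_deriv ?_
  have hR' : R / A - γ ≠ 0 := by
    rw [div_sub' hA]
    exact div_ne_zero (by rwa [mul_comm] at hR) hA
  field_simp
  ring

theorem hasDerivAt_borrowerProfit_productivity {γ A S R : ℝ} (hR : R - γ * A ≠ 0) :
    HasDerivAt (fun x => borrowerProfit R γ x S) (R ^ 2 * (1 - γ) * S / (R - γ * A) ^ 2) A := by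
  have hnum := ((hasDerivAt_id' A).const_mul (R * (1 - γ))).mul_const S
  refine (hnum.div (((hasDerivAt_id' A).const_mul γ).const_sub R) hR).congr_deriv ?_
  field_simp
  ring

namespace LinOptimal

variable {A γ S R k b : ℝ}

theorem budget_eq (hR : 0 < R) (h : LinOptimal A γ S R k b) : k = S + b := by
  obtain ⟨⟨hk, hkb, hcredit⟩, hopt⟩ := h
  have hrepay : R * (k - S) ≤ R * b := mul_le_mul_of_nonneg_left (by linarith) hR.le
  have := hopt k (k - S) ⟨hk, by linarith, hrepay.trans hcredit⟩
  have : b ≤ k - S := le_of_mul_le_mul_left (by linarith) hR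
  linarith

theorem capital_mul_le (hR : 0 < R) (h : LinOptimal A γ S R k b) :
    k * (R - γ * A) ≤ R * S := by
  have hb : b = k - S := by linarith [h.budget_eq hR]
  have hcredit := h.1.2.2
  subst hb
  linarith

theorem capital_le_div (hR : 0 < R) (hγA : γ * A < R) (h : LinOptimal A γ S R k b) :
    k ≤ R * S / (R - γ * A) :=
  (le_div_iff₀ (sub_pos.2 hγA)).2 (h.capital_mul_le hR)

theorem profit_eq_of_le (hR : 0 ≤ R) (hS : 0 ≤ S) (hAR : A ≤ R) (h : LinOptimal A γ S R k b) :
    A * k - R * b = R * S := by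
  obtain ⟨⟨hk, hkb, -⟩, hopt⟩ := h
  have hlend := hopt 0 (-S) ⟨le_rfl, by linarith, by nlinarith⟩
  nlinarith [mul_le_mul_of_nonneg_left hkb hR, mul_nonneg (sub_nonneg.2 hAR) hk]

theorem capital_eq_zero (hR : 0 ≤ R) (hS : 0 ≤ S) (hAR : A < R) (h : LinOptimal A γ S R k b) :
    k = 0 := by
  have hprofit := h.profit_eq_of_le hR hS hAR.le
  obtain ⟨⟨hk, hkb, -⟩, -⟩ := h
  nlinarith [mul_le_mul_of_nonneg_left hkb hR]

/-- Otherwise the profit `(A - R) t + R S` of the feasible plan `(t, t - S)` is unbounded. -/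
theorem mul_lt_of_lt (hR : 0 ≤ R) (hS : 0 ≤ S) (hRA : R < A) (h : LinOptimal A γ S R k b) :
    γ * A < R := by
  by_contra! hle
  set t := max 0 ((A * k - R * b - R * S) / (A - R) + 1)
  have ht : (A * k - R * b - R * S) / (A - R) < t :=
    lt_max_of_lt_right (lt_add_one _)
  have hprofit := (div_lt_iff₀ (sub_pos.2 hRA)).1 ht
  have ht0 : 0 ≤ t := le_max_left _ _
  have := h.2 t (t - S) ⟨ht0, by linarith, by nlinarith [mul_le_mul_of_nonneg_right hle ht0]⟩
  linarith

theorem capital_eq_of_lt (hR : 0 < R) (hS : 0 ≤ S) (hRA : R < A) (h : LinOptimal A γ S R k b) :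
    k = R * S / (R - γ * A) := by
  have hγA := h.mul_lt_of_lt hR.le hS hRA
  set K := R * S / (R - γ * A)
  have hK : K * (R - γ * A) = R * S := div_mul_cancel₀ _ (sub_pos.2 hγA).ne'
  have hK0 : 0 ≤ K := div_nonneg (mul_nonneg hR.le hS) (sub_pos.2 hγA).le
  have hb : b = k - S := by linarith [h.budget_eq hR]
  subst hb
  have := h.2 K (K - S) ⟨hK0, by linarith, by linarith⟩
  have : K ≤ k := le_of_mul_le_mul_left (by linarith) (sub_pos.2 hRA)
  exact le_antisymm (h.capital_le_div hR hγA) this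

theorem capital_pos_of_lt (hR : 0 < R) (hS : 0 < S) (hRA : R < A) (h : LinOptimal A γ S R k b) :
    0 < k := by
  rw [h.capital_eq_of_lt hR hS.le hRA]
  exact div_pos (mul_pos hR hS) (sub_pos.2 (h.mul_lt_of_lt hR.le hS.le hRA))

theorem profit_eq_of_lt (hR : 0 < R) (hS : 0 ≤ S) (hRA : R < A) (h : LinOptimal A γ S R k b) :
    A * k - R * b = borrowerProfit R γ A S := by
  have hden := (sub_pos.2 (h.mul_lt_of_lt hR.le hS hRA)).ne'
  rw [show b = k - S by linarith [h.budget_eq hR], h.capital_eq_of_lt hR hS hRA, borrowerProfit,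
    eq_div_iff hden]
  linear_combination (A - R) * div_mul_cancel₀ (R * S) hden

end LinOptimal

namespace LinEquilibrium

variable {m : ℕ} {A γ S : ℕ → ℝ} {R : ℝ} {k b : ℕ → ℝ}

theorem optimal (hE : LinEquilibrium m A γ S R k b) {i : ℕ} (hi : i < m) :
    LinOptimal (A i) (γ i) (S i) R (k i) (b i) :=
  hE.2.1 i hi

theorem capital_nonneg (hE : LinEquilibrium m A γ S R k b) {i : ℕ} (hi : i < m) : 0 ≤ k i :=
  (hE.optimal hi).1.1

theorem sum_capital (hE : LinEquilibrium m A γ S R k b) :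
    ∑ i ∈ range m, k i = ∑ i ∈ range m, S i := by
  rw [sum_congr rfl fun i hi => (hE.optimal (mem_range.1 hi)).budget_eq hE.1, sum_add_distrib,
    hE.2.2, add_zero]

theorem sum_output_le (hE : LinEquilibrium m A γ S R k b) {a : ℝ} (ha : ∀ i < m, A i ≤ a) :
    ∑ i ∈ range m, A i * k i ≤ a * ∑ i ∈ range m, S i := by
  rw [← hE.sum_capital, mul_sum]
  exact sum_le_sum fun i hi =>
    mul_le_mul_of_nonneg_right (ha i (mem_range.1 hi)) (hE.capital_nonneg (mem_range.1 hi))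

theorem sum_output_eq_sum_profit (hE : LinEquilibrium m A γ S R k b) :
    ∑ i ∈ range m, A i * k i = ∑ i ∈ range m, (A i * k i - R * b i) := by
  rw [sum_sub_distrib, ← mul_sum, hE.2.2, mul_zero, sub_zero]

theorem capital_le_sum (hE : LinEquilibrium m A γ S R k b) {i : ℕ} (hi : i < m) :
    k i ≤ ∑ i ∈ range m, S i := by
  rw [← hE.sum_capital]
  exact single_le_sum (fun j hj => hE.capital_nonneg (mem_range.1 hj)) (mem_range.2 hi)

section LastAgent

variable {p : ℕ}

theorem capital_last_eq_sum_iff (hE : LinEquilibrium (p + 1) A γ S R k b) :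
    k p = ∑ i ∈ range (p + 1), S i ↔ ∀ i < p, k i = 0 := by
  rw [← hE.sum_capital, sum_range_succ, right_eq_add,
    sum_eq_zero_iff_of_nonneg fun i hi => hE.capital_nonneg (by simp at hi; omega)]
  simp only [mem_range]

theorem sum_output_eq_iff (hE : LinEquilibrium (p + 1) A γ S R k b)
    (hA : ∀ i < p, A i < A p) :
    ∑ i ∈ range (p + 1), A i * k i = A p * ∑ i ∈ range (p + 1), S i ↔
      k p = ∑ i ∈ range (p + 1), S i := by
  have hle : ∀ i ∈ range p, A i * k i ≤ A p * k i := fun i hi =>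
    mul_le_mul_of_nonneg_right (hA i (mem_range.1 hi)).le
      (hE.capital_nonneg (by simp at hi; omega))
  rw [hE.capital_last_eq_sum_iff, ← hE.sum_capital, mul_sum, sum_range_succ, sum_range_succ,
    add_left_inj, sum_eq_sum_iff_of_le hle]
  simp only [mem_range, mul_eq_mul_right_iff]
  exact forall₂_congr fun i hi => or_iff_right (hA i hi).ne

end LastAgent

/-- Whether the most productive agent `q + 1` absorbs the whole capital is decided by the
second most productive agent `q`: if `R ≤ A q`, the credit limit of agent `q + 1` must
accommodate all of it; if `A q < R`, every other agent lends out everything. -/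
theorem capital_last_eq_sum_iff_mul_le {q : ℕ} (hE : LinEquilibrium (q + 2) A γ S R k b)
    (hA : StrictMonoOn A (Set.Iio (q + 2))) (hS : ∀ i < q + 2, 0 < S i) :
    k (q + 1) = ∑ i ∈ range (q + 2), S i ↔
      A q * (∑ i ∈ range (q + 2), S i - S (q + 1)) ≤
        γ (q + 1) * A (q + 1) * ∑ i ∈ range (q + 2), S i := by
  set T := ∑ i ∈ range (q + 2), S i
  have hrest : 0 ≤ T - S (q + 1) := by
    rw [show T = _ from sum_range_succ S (q + 1), add_sub_cancel_right]
    exact sum_nonneg fun i hi => (hS i (by simp at hi; omega)).le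
  have hAq : A q < A (q + 1) := hA (by simp) (by simp) (by omega)
  have hopt := hE.optimal (show q + 1 < q + 2 by omega)
  constructor
  · intro hk
    have hzero := hE.capital_last_eq_sum_iff.1 hk
    have hRq : A q ≤ R := by
      by_contra! hlt
      exact ((hE.optimal (by omega)).capital_pos_of_lt hE.1 (hS q (by omega)) hlt).ne'
        (hzero q (by omega))
    have hb : b (q + 1) = T - S (q + 1) := by linarith [hopt.budget_eq hE.1]
    have hcredit := hopt.1.2.2
    rw [hb, hk] at hcredit
    calc A q * (T - S (q + 1)) ≤ R * (T - S (q + 1)) := mul_le_mul_of_nonneg_right hRq hrest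
      _ ≤ γ (q + 1) * A (q + 1) * T := by linarith
  · intro hcond
    refine le_antisymm (hE.capital_le_sum (by omega)) ?_
    rcases le_or_gt R (A q) with hRq | hqR
    · have hRA := hRq.trans_lt hAq
      rw [hopt.capital_eq_of_lt hE.1 (hS _ (by omega)).le hRA,
        le_div_iff₀ (sub_pos.2 (hopt.mul_lt_of_lt hE.1.le (hS _ (by omega)).le hRA))]
      nlinarith [mul_le_mul_of_nonneg_right hRq hrest]
    · refine (hE.capital_last_eq_sum_iff.2 fun i hi => ?_).ge
      have hAi : A i ≤ A q := (hA.le_iff_le (by simp; omega) (by simp)).2 (by omega)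
      exact (hE.optimal (by omega)).capital_eq_zero hE.1.le (hS i (by omega)).le
        (hAi.trans_lt hqR)

theorem sum_output_eq_iff_of_two_le (hE : LinEquilibrium m A γ S R k b) (hm : 2 ≤ m)
    (hA : StrictMonoOn A (Set.Iio m)) (hS : ∀ i < m, 0 < S i) :
    ∑ i ∈ range m, A i * k i = A (m - 1) * ∑ i ∈ range m, S i ↔
      A (m - 2) * (1 - S (m - 1) / ∑ i ∈ range m, S i) ≤ γ (m - 1) * A (m - 1) := by
  obtain ⟨q, rfl⟩ : ∃ q, m = q + 2 := ⟨m - 2, by omega⟩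
  have hT : 0 < ∑ i ∈ range (q + 2), S i :=
    sum_pos (fun i hi => hS i (mem_range.1 hi)) nonempty_range_add_one
  simp only [show q + 2 - 1 = q + 1 by omega, Nat.add_sub_cancel]
  rw [one_sub_div hT.ne', mul_div_assoc', div_le_iff₀ hT]
  exact (hE.sum_output_eq_iff fun i hi => hA (by simp; omega) (by simp) hi).trans
    (hE.capital_last_eq_sum_iff_mul_le hA hS)

section Regime

variable {n : ℕ}

/-- Below `A n`, every agent `i ≥ n` borrows, and demands more capital than at the rate `A n`. -/
theorem le_rate (hE : LinEquilibrium m A γ S R k b) (hA : ∀ i < m, 0 < A i)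
    (hmono : StrictMonoOn A (Set.Iio m)) (hγ : ∀ i < m, 0 < γ i) (hS : ∀ i < m, 0 < S i)
    (hn : n < m) (hD : ∑ i ∈ range m, S i ≤ Dn m A γ S n) : A n ≤ R := by
  by_contra! hR
  have hdemand : ∀ i ∈ (range m).filter (n ≤ ·), A n * S i / (A n - γ i * A i) < k i := by
    intro i hi
    obtain ⟨him, hni⟩ := by simpa using hi
    have hRA : R < A i := hR.trans_le ((hmono.le_iff_le hn him).2 hni)
    have hopt := hE.optimal him
    rw [hopt.capital_eq_of_lt hE.1 (hS i him).le hRA]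
    exact mul_div_sub_lt_mul_div_sub (mul_pos (hγ i him) (hA i him)) (hS i him)
      (hopt.mul_lt_of_lt hE.1.le (hS i him).le hRA) hR
  have hlt := sum_lt_sum_of_nonempty ⟨n, by simp [hn]⟩ hdemand
  have hle : ∑ i ∈ (range m).filter (n ≤ ·), k i ≤ ∑ i ∈ range m, k i :=
    sum_le_sum_of_subset_of_nonneg (filter_subset _ _)
      fun i hi _ => hE.capital_nonneg (mem_range.1 hi)
  rw [hE.sum_capital] at hle
  exact (hD.trans_lt hlt).not_ge (by simpa [Dn] using hle)

/-- Above `A n`, only the agents `i > n` hold capital, and less than at the rate `A n`. -/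
theorem rate_le (hE : LinEquilibrium m A γ S R k b) (hA : ∀ i < m, 0 < A i)
    (hmono : StrictMonoOn A (Set.Iio m)) (hγ : ∀ i < m, 0 < γ i) (hS : ∀ i < m, 0 < S i)
    (hub : ∀ i < m, γ i * A i < A n) (hn : n < m) (hB : Bn m A γ S n ≤ ∑ i ∈ range m, S i) :
    R ≤ A n := by
  by_contra! hR
  have hsum : ∑ i ∈ (range m).filter (n < ·), k i = ∑ i ∈ range m, S i := by
    rw [← hE.sum_capital]
    refine sum_filter_of_ne fun i hi hk => ?_
    by_contra! hin
    have hAi : A i ≤ A n := (hmono.le_iff_le (mem_range.1 hi) hn).2 hin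
    exact hk ((hE.optimal (mem_range.1 hi)).capital_eq_zero hE.1.le (hS i (mem_range.1 hi)).le
      (hAi.trans_lt hR))
  have hSpos : 0 < ∑ i ∈ range m, S i :=
    sum_pos (fun i hi => hS i (mem_range.1 hi)) ⟨n, mem_range.2 hn⟩
  have hne := nonempty_of_sum_ne_zero (hsum.trans_ne hSpos.ne')
  have hdemand : ∀ i ∈ (range m).filter (n < ·), k i < A n * S i / (A n - γ i * A i) := by
    intro i hi
    obtain ⟨him, -⟩ := by simpa using hi
    exact ((hE.optimal him).capital_le_div hE.1 ((hub i him).trans hR)).trans_lt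
      (mul_div_sub_lt_mul_div_sub (mul_pos (hγ i him) (hA i him)) (hS i him) (hub i him) hR)
  have hlt := sum_lt_sum_of_nonempty hne hdemand
  rw [hsum] at hlt
  exact hB.not_gt (by simpa [Bn] using hlt)

/-- Since borrowing cancels out, aggregate output is aggregate profit: `A n S i` for the
lenders `i ≤ n` and `borrowerProfit` for the borrowers `i > n`. -/
theorem sum_output_eq_Yformula (hE : LinEquilibrium m A γ S R k b)
    (hmono : StrictMonoOn A (Set.Iio m)) (hS : ∀ i < m, 0 < S i) (hn : n < m) (hR : R = A n) :
    ∑ i ∈ range m, A i * k i = Yformula m n γ S A := by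
  rw [hE.sum_output_eq_sum_profit, ← sum_filter_add_sum_filter_not _ (· ≤ n), Yformula, mul_sum]
  simp only [not_le]
  congr 1
  · refine sum_congr rfl fun i hi => ?_
    obtain ⟨him, hin⟩ := by simpa using hi
    rw [(hE.optimal him).profit_eq_of_le hE.1.le (hS i him).le
      (hR ▸ (hmono.le_iff_le him hn).2 hin), hR]
  · refine sum_congr rfl fun i hi => ?_
    obtain ⟨him, hni⟩ := by simpa using hi
    rw [(hE.optimal him).profit_eq_of_lt hE.1 (hS i him).le
      (hR ▸ hmono hn him hni), hR, borrowerProfit]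

end Regime

end LinEquilibrium

section Yformula

variable {m n : ℕ} {γ S A : ℕ → ℝ}

theorem Yformula_eq (a : ℕ → ℝ) :
    Yformula m n γ S a = a n * ∑ i ∈ (range m).filter (· ≤ n), S i +
      ∑ i ∈ (range m).filter (n < ·), borrowerProfit (a n) (γ i) (a i) (S i) :=
  rfl

theorem hasDerivAt_Yformula_update_of_lt {j : ℕ} (hnj : n < j) (hjm : j < m)
    (hden : A n - γ j * A j ≠ 0) :
    HasDerivAt (fun x => Yformula m n γ S (Function.update A j x))
      (A n ^ 2 * (1 - γ j) * S j / (A n - γ j * A j) ^ 2) (A j) := by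
  have hj : j ∈ (range m).filter (n < ·) := by simp [hnj, hjm]
  simp only [Yformula_eq, Function.update_of_ne hnj.ne]
  set d := A n ^ 2 * (1 - γ j) * S j / (A n - γ j * A j) ^ 2
  refine ((HasDerivAt.fun_sum (A' := fun i => if i = j then d else 0) fun i _ => ?_).const_add
    _).congr_deriv (by simp [hj])
  by_cases hij : i = j
  · subst hij
    simpa using hasDerivAt_borrowerProfit_productivity hden
  · simpa [Function.update_of_ne hij, hij] using hasDerivAt_const _ _

theorem hasDerivAt_Yformula_update_self (hA : ∀ i < m, A i ≠ 0)
    (hden : ∀ i < m, A n - γ i * A i ≠ 0) :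
    HasDerivAt (fun x => Yformula m n γ S (Function.update A n x))
      (∑ i ∈ (range m).filter (· ≤ n), S i -
        ∑ i ∈ (range m).filter (n < ·), (1 - γ i) * γ i * S i / (A n / A i - γ i) ^ 2) (A n) := by
  have hfun : (fun x => Yformula m n γ S (Function.update A n x)) = fun x =>
      x * ∑ i ∈ (range m).filter (· ≤ n), S i +
        ∑ i ∈ (range m).filter (n < ·), borrowerProfit x (γ i) (A i) (S i) := by
    funext x
    rw [Yformula_eq, Function.update_self]
    congr 1
    exact sum_congr rfl fun i hi => by rw [Function.update_of_ne (by simp at hi; omega)]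
  rw [hfun, sub_eq_add_neg, ← sum_neg_distrib]
  refine (((hasDerivAt_id' _).mul_const _).add (HasDerivAt.fun_sum fun i hi => ?_)).congr_deriv
    (by rw [one_mul])
  obtain ⟨him, -⟩ := by simpa using hi
  exact hasDerivAt_borrowerProfit_rate (hA i him) (hden i him)

end Yformula

/-- bounds on the equilibrium aggregate output, the explicit output in the
regime `R = Aₙ`, and its partial derivatives with respect to the productivities. -/
theorem stmt7 (m : ℕ) (hm : 2 ≤ m) (A γ S : ℕ → ℝ) (M : ℝ)
    (hA : ∀ i < m, 0 < A i)
    (hAmono : ∀ i j, i < j → j < m → A i < A j)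
    (hγ : ∀ i < m, γ i ∈ Set.Ioo (0:ℝ) 1)
    (hS : ∀ i < m, 0 < S i)
    (hM : IsGreatest {x | ∃ i < m, x = γ i * A i} M) :
    -- (1) `Y ≤ A_m S`, with equality iff `γ_m A_m ≥ A_{m-1}(1 - S_m/S)`
    (∀ R k b, LinEquilibrium m A γ S R k b →
      (∑ i ∈ Finset.range m, A i * k i) ≤ A (m-1) * ∑ i ∈ Finset.range m, S i ∧
      ((∑ i ∈ Finset.range m, A i * k i) = A (m-1) * (∑ i ∈ Finset.range m, S i) ↔
        A (m-2) * (1 - S (m-1) / ∑ i ∈ Finset.range m, S i) ≤ γ (m-1) * A (m-1))) ∧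
    -- (2) the regime `R = Aₙ`
    (∀ n < m, M < A n →
      Bn m A γ S n ≤ (∑ i ∈ Finset.range m, S i) →
      (∑ i ∈ Finset.range m, S i) ≤ Dn m A γ S n →
      (∀ R k b, LinEquilibrium m A γ S R k b →
        R = A n ∧ (∑ i ∈ Finset.range m, A i * k i) = Yformula m n γ S A) ∧
      (∀ j, n < j → j < m →
        ∃ d : ℝ, 0 < d ∧
          HasDerivAt (fun x => Yformula m n γ S (Function.update A j x)) d (A j)) ∧
      HasDerivAt (fun x => Yformula m n γ S (Function.update A n x))
        ((∑ i ∈ (Finset.range m).filter (fun i => i ≤ n), S i) -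
          ∑ i ∈ (Finset.range m).filter (fun i => n < i),
            (1 - γ i) * γ i * S i / (A n / A i - γ i) ^ 2) (A n)) := by
  have hmono : StrictMonoOn A (Set.Iio m) := fun i hi j hj hij => hAmono i j hij hj
  have hγ0 : ∀ i < m, 0 < γ i := fun i hi => (hγ i hi).1
  refine ⟨fun R k b hE => ⟨hE.sum_output_le fun i hi =>
      (hmono.le_iff_le hi (by simp; omega)).2 (by omega),
      hE.sum_output_eq_iff_of_two_le hm hmono hS⟩, fun n hn hMn hB hD => ?_⟩
  have hub : ∀ i < m, γ i * A i < A n := fun i hi => (hM.2 ⟨i, hi, rfl⟩).trans_lt hMn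
  have hden : ∀ i < m, A n - γ i * A i ≠ 0 := fun i hi => (sub_pos.2 (hub i hi)).ne'
  refine ⟨fun R k b hE => ?_, fun j hnj hjm => ⟨_, ?_, hasDerivAt_Yformula_update_of_lt hnj hjm
    (hden j hjm)⟩, hasDerivAt_Yformula_update_self (fun i hi => (hA i hi).ne') hden⟩
  · have hR := le_antisymm (hE.rate_le hA hmono hγ0 hS hub hn hB)
      (hE.le_rate hA hmono hγ0 hS hn hD)
    exact ⟨hR, hE.sum_output_eq_Yformula hmono hS hn hR⟩
  · exact div_pos (mul_pos (mul_pos (pow_pos (hA n hn) 2) (sub_pos.2 (hγ j hjm).2)) (hS j hjm))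
      (pow_pos (sub_pos.2 (hub j hjm)) 2)
end

section
/- Consider the static economy with production functions F_i(k) = A_i·f_i(k) (A_i > 0), credit limits γ_i ∈ (0,1), initial wealths S_i > 0, and borrowing constraints R·b_i ≤ γ_i·A_i·f_i(k_i). Suppose (R, (k_i, b_i)_i) is an equilibrium of this economy with aggregate output Y = Σ_i A_i·f_i(k_i). Then for every x > 0, the list (x·R, (k_i, b_i)_i) is an equilibrium of the economy with productivities (x·A_i)_i (all other fundamentals unchanged), and its aggregate output equals x·Y. -/
/-- Feasibility for an agent with production function `F`, credit limit `γ`,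
initial wealth `S`, and interest rate `R`. -/
def Feasible (F : ℝ → ℝ) (γ S R k b : ℝ) : Prop :=
  0 ≤ k ∧ k ≤ S + b ∧ R * b ≤ γ * F k

/-- `(k, b)` solves the agent's profit-maximization problem given `R`. -/
def Optimal (F : ℝ → ℝ) (γ S R k b : ℝ) : Prop :=
  Feasible F γ S R k b ∧
    ∀ k' b', Feasible F γ S R k' b' → F k' - R * b' ≤ F k - R * b

/-- Equilibrium of the static economy with production functions `Fᵢ k = Aᵢ * fᵢ k`. -/
def Equilibrium (m : ℕ) (A : Fin m → ℝ) (f : Fin m → ℝ → ℝ) (γ S : Fin m → ℝ)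
    (R : ℝ) (k b : Fin m → ℝ) : Prop :=
  0 < R ∧ (∀ i, Optimal (fun x => A i * f i x) (γ i) (S i) R (k i) (b i)) ∧
    ∑ i, b i = 0

/-!
Multiplying every production function and the interest rate by the same `x > 0` multiplies
both sides of each borrowing constraint and each agent's profit by `x`, so every agent faces
the same feasible set and the same ranking of plans. Market clearing does not involve `R` or
the productivities at all.
-/

section Scaling

variable {F : ℝ → ℝ} {γ S R k b x : ℝ}

theorem feasible_const_mul_iff (hx : 0 < x) :
    Feasible (fun y => x * F y) γ S (x * R) k b ↔ Feasible F γ S R k b := by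
  have borrowing : x * R * b ≤ γ * (x * F k) ↔ R * b ≤ γ * F k := by
    rw [mul_assoc, mul_left_comm γ]
    exact mul_le_mul_iff_of_pos_left hx
  simp only [Feasible, borrowing]

theorem optimal_const_mul_iff (hx : 0 < x) :
    Optimal (fun y => x * F y) γ S (x * R) k b ↔ Optimal F γ S R k b := by
  have profit (k b : ℝ) : x * F k - x * R * b = x * (F k - R * b) := by ring
  simp only [Optimal, feasible_const_mul_iff hx, profit, mul_le_mul_iff_of_pos_left hx]

end Scaling

theorem Equilibrium.const_mul {m : ℕ} {A : Fin m → ℝ} {f : Fin m → ℝ → ℝ} {γ S : Fin m → ℝ}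
    {R : ℝ} {k b : Fin m → ℝ} (heq : Equilibrium m A f γ S R k b) {x : ℝ} (hx : 0 < x) :
    Equilibrium m (fun i => x * A i) f γ S (x * R) k b := by
  obtain ⟨hR, hopt, hclear⟩ := heq
  refine ⟨mul_pos hx hR, fun i => ?_, hclear⟩
  simp_rw [mul_assoc]
  exact (optimal_const_mul_iff hx).2 (hopt i)

theorem stmt8_general (m : ℕ) (A : Fin m → ℝ) (f : Fin m → ℝ → ℝ) (γ S : Fin m → ℝ)
    (R : ℝ) (k b : Fin m → ℝ)
    (heq : Equilibrium m A f γ S R k b) :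
    ∀ x : ℝ, 0 < x →
      Equilibrium m (fun i => x * A i) f γ S (x * R) k b ∧
      (∑ i, (x * A i) * f i (k i)) = x * ∑ i, A i * f i (k i) := by
  intro x hx
  refine ⟨heq.const_mul hx, ?_⟩
  simp_rw [Finset.mul_sum, mul_assoc]

/-- homogeneous productivity changes scale the equilibrium: if `(R,(kᵢ,bᵢ))`
is an equilibrium for productivities `(Aᵢ)`, then `(xR,(kᵢ,bᵢ))` is an equilibrium for
`(xAᵢ)`, with aggregate output `x·Y`. -/
theorem stmt8 (m : ℕ) (A : Fin m → ℝ) (f : Fin m → ℝ → ℝ) (γ S : Fin m → ℝ)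
    (hA : ∀ i, 0 < A i) (hγ : ∀ i, γ i ∈ Set.Ioo (0:ℝ) 1) (hS : ∀ i, 0 < S i)
    (R : ℝ) (k b : Fin m → ℝ)
    (heq : Equilibrium m A f γ S R k b) :
    ∀ x : ℝ, 0 < x →
      Equilibrium m (fun i => x * A i) f γ S (x * R) k b ∧
      (∑ i, (x * A i) * f i (k i)) = x * ∑ i, A i * f i (k i) :=
  stmt8_general m A f γ S R k b heq
end

section
/- Fix 2 ≤ n ≤ m, positive reals A_1 < A_2 < ⋯ < A_m with max_i γ_i·A_i < A_1, and S_i > 0. Suppose that on an open set U of credit-limit vectors (γ_n, …, γ_m) ∈ (0,1)^{m−n+1} there is a differentiable function R : U → ℝ with A_{n−1} < R(γ) < A_n satisfying Σ_{i=n}^m γ_i·A_i·S_i/(R(γ)−γ_i·A_i) = Σ_{i=1}^{n−1} S_i identically on U, and define Y(γ) = Σ_{i=n}^m A_i·R(γ)·S_i/(R(γ)−γ_i·A_i). Then: (1) if n < m, ∂Y/∂γ_n < 0 < ∂Y/∂γ_m on U; (2) for any i with n < i < m: ∂Y/∂γ_i > 0 whenever (A_i−A_{i−1})/(A_m−A_i)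 > [Σ_{t=i+1}^m γ_t·A_t·S_t/(A_{n−1}−γ_t·A_t)²] / [Σ_{t=n}^{i−1} γ_t·A_t·S_t/(A_n−γ_t·A_t)²], and ∂Y/∂γ_i < 0 whenever (A_i−A_n)/(A_{i+1}−A_i) < [Σ_{t=i+1}^m γ_t·A_t·S_t/(A_n−γ_t·A_t)²] / [Σ_{t=n}^{i−1} γ_t·A_t·S_t/(A_{n−1}−γ_t·A_t)²]. -/
open Finset

/-- The equilibrium aggregate output `Y(γ) = Σ_{i ≥ n} Aᵢ R(γ) Sᵢ/(R(γ) - γᵢ Aᵢ)`,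
in the regime where producers are the agents `i ≥ n`, as a function of the
credit-limit vector `g`. -/
noncomputable def Yagg (m n : ℕ) (A S : ℕ → ℝ) (R : (Fin m → ℝ) → ℝ)
    (g : Fin m → ℝ) : ℝ :=
  ∑ i ∈ Finset.univ.filter (fun i : Fin m => n ≤ (i : ℕ)),
    A (i : ℕ) * R g * S (i : ℕ) / (R g - g i * A (i : ℕ))

open Filter Topology

/-!
Write `bᵢ = γᵢAᵢSᵢ/(R - γᵢAᵢ)` for the borrowing of producer `i`, so that `Y = Σ AᵢSᵢ + Σ Aᵢbᵢ`
while market clearing keeps `Σ bᵢ` constant. With `wᵢ = -∂bᵢ/∂R > 0`, differentiating the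
market-clearing identity in `γⱼ` gives `(∂R/∂γⱼ) Σ wᵢ = AⱼSⱼR/(R - γⱼAⱼ)² > 0`, and then
`∂Y/∂γⱼ = (∂R/∂γⱼ) Σᵢ (Aⱼ - Aᵢ) wᵢ`. The sign of the last sum is controlled by the
monotonicity of `A` once each `wᵢ` is squeezed between its values at `R = A_n` and
`R = A_{n-1}`.
-/
/-- The loan `k - s` of a producer with productivity `a`, wealth `s` and credit limit `γ`
at interest rate `r`. -/
noncomputable def borrowing (a s γ r : ℝ) : ℝ := γ * a * s / (r - γ * a)

/-- `-∂/∂r` of `borrowing a s γ r`. -/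
noncomputable def weight (a s γ r : ℝ) : ℝ := γ * a * s / (r - γ * a) ^ 2

theorem mul_div_sub_eq_add_borrowing {a s γ r : ℝ} (h : r - γ * a ≠ 0) :
    a * r * s / (r - γ * a) = a * s + a * borrowing a s γ r := by
  rw [borrowing, mul_div_assoc', add_div' _ _ _ h]
  congr 1
  ring

theorem HasDerivAt.borrowing {γ r : ℝ → ℝ} {γ' ρ x : ℝ} (a s : ℝ) (hγ : HasDerivAt γ γ' x)
    (hr : HasDerivAt r ρ x) (h : r x - γ x * a ≠ 0) :
    HasDerivAt (fun y => _root_.borrowing a s (γ y) (r y))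
      (γ' * (a * s * r x / (r x - γ x * a) ^ 2) - ρ * weight a s (γ x) (r x)) x := by
  refine (((hγ.mul_const a).mul_const s).fun_div (hr.fun_sub (hγ.mul_const a)) h).congr_deriv ?_
  rw [weight]
  field_simp
  ring

theorem weight_pos {a s γ r : ℝ} (hpos : 0 < γ * a * s) (h : γ * a < r) : 0 < weight a s γ r :=
  div_pos hpos (pow_pos (sub_pos.2 h) 2)

theorem weight_strictAntiOn {a s γ : ℝ} (hpos : 0 < γ * a * s) :
    StrictAntiOn (weight a s γ) (Set.Ioi (γ * a)) := fun _ h₁ _ _ h =>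
  div_lt_div_of_pos_left hpos (pow_pos (sub_pos.2 h₁) 2)
    (pow_lt_pow_left₀ (sub_lt_sub_right h _) (sub_pos.2 h₁).le two_ne_zero)

theorem hasDerivAt_comp_update {ι F : Type*} [Fintype ι] [DecidableEq ι]
    [NormedAddCommGroup F] [NormedSpace ℝ F] {f : (ι → ℝ) → F} {g : ι → ℝ}
    (hf : DifferentiableAt ℝ f g) (j : ι) :
    HasDerivAt (fun x => f (Function.update g j x)) (fderiv ℝ f g (Pi.single j 1)) (g j) := by
  rw [← Function.update_eq_self j g] at hf
  have := hf.hasFDerivAt.comp_hasDerivAt (g j) (hasDerivAt_update g j (g j))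
  rwa [Function.update_eq_self] at this

theorem eventually_update_mem {ι E : Type*} [TopologicalSpace E] [DecidableEq ι]
    {U : Set (ι → E)} {g : ι → E} (hU : IsOpen U) (hg : g ∈ U) (j : ι) :
    ∀ᶠ x in 𝓝 (g j), Function.update g j x ∈ U :=
  ((continuous_const.update j continuous_id).tendsto' (g j) g
    (Function.update_eq_self j g)).eventually_mem (hU.mem_nhds hg)

theorem hasDerivAt_sum_mul_borrowing_update {ι : Type*} [Fintype ι] [DecidableEq ι]
    (P : Finset ι) (a s c g : ι → ℝ) {r : ℝ → ℝ} {ρ : ℝ} {j : ι} (hj : j ∈ P)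
    (hr : HasDerivAt r ρ (g j)) (hD : ∀ i ∈ P, r (g j) - g i * a i ≠ 0) :
    HasDerivAt (fun x => ∑ i ∈ P, c i * borrowing (a i) (s i) (Function.update g j x i) (r x))
      (c j * (a j * s j * r (g j) / (r (g j) - g j * a j) ^ 2) -
        ρ * ∑ i ∈ P, c i * weight (a i) (s i) (g i) (r (g j))) (g j) := by
  have hγ (i : ι) :
      HasDerivAt (fun x => Function.update g j x i) ((Pi.single j 1 : ι → ℝ) i) (g j) :=
    hasDerivAt_pi.1 (hasDerivAt_update g j (g j)) i
  refine (HasDerivAt.fun_sum fun i hi =>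
    ((hγ i).borrowing (a i) (s i) hr (by simpa using hD i hi)).const_mul (c i)).congr_deriv ?_
  simp only [Function.update_eq_self, mul_sub, sum_sub_distrib, mul_sum]
  congr 1
  · rw [sum_eq_single_of_mem j hj fun i _ hij => by simp [hij]]
    simp
  · exact sum_congr rfl fun i _ => by ring

abbrev producers (m n : ℕ) : Finset (Fin m) := univ.filter fun i => n ≤ (i : ℕ)

section Model

variable {m n : ℕ} {A S : ℕ → ℝ} {R : (Fin m → ℝ) → ℝ} {U : Set (Fin m → ℝ)} {C : ℝ}
  {g : Fin m → ℝ} {j : Fin m}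

theorem fderiv_single_mul_sum_weight (hU : IsOpen U) (hRdiff : DifferentiableOn ℝ R U)
    (hD : ∀ g ∈ U, ∀ i : Fin m, n ≤ (i : ℕ) → g i * A i < R g)
    (hRmk : ∀ g ∈ U, ∑ i ∈ producers m n, borrowing (A i) (S i) (g i) (R g) = C)
    (hg : g ∈ U) (hj : n ≤ (j : ℕ)) :
    fderiv ℝ R g (Pi.single j 1) * ∑ i ∈ producers m n, weight (A i) (S i) (g i) (R g) =
      A j * S j * R g / (R g - g j * A j) ^ 2 := by
  have hr := hasDerivAt_comp_update (hRdiff.differentiableAt (hU.mem_nhds hg)) j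
  have hsum := hasDerivAt_sum_mul_borrowing_update (producers m n) (fun i => A i) (fun i => S i)
    1 g (by simpa using hj) hr (by simpa using fun i hi => (sub_pos.2 (hD g hg i hi)).ne')
  have hconst : HasDerivAt (fun x => ∑ i ∈ producers m n, (1 : Fin m → ℝ) i *
      borrowing (A i) (S i) (Function.update g j x i) (R (Function.update g j x))) 0 (g j) := by
    refine (hasDerivAt_const (g j) C).congr_of_eventuallyEq ?_
    filter_upwards [eventually_update_mem hU hg j] with x hx
    simpa using hRmk _ hx
  have := hsum.unique hconst
  simp only [Function.update_eq_self, Pi.one_apply, one_mul] at this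
  linarith

theorem hasDerivAt_Yagg_update (hU : IsOpen U) (hRdiff : DifferentiableOn ℝ R U)
    (hD : ∀ g ∈ U, ∀ i : Fin m, n ≤ (i : ℕ) → g i * A i < R g)
    (hRmk : ∀ g ∈ U, ∑ i ∈ producers m n, borrowing (A i) (S i) (g i) (R g) = C)
    (hg : g ∈ U) (hj : n ≤ (j : ℕ)) :
    HasDerivAt (fun x => Yagg m n A S R (Function.update g j x))
      (fderiv ℝ R g (Pi.single j 1) *
        ∑ i ∈ producers m n, (A j - A i) * weight (A i) (S i) (g i) (R g)) (g j) := by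
  have hr := hasDerivAt_comp_update (hRdiff.differentiableAt (hU.mem_nhds hg)) j
  have hsum := hasDerivAt_sum_mul_borrowing_update (producers m n) (fun i => A i) (fun i => S i)
    (fun i => A i) g (by simpa using hj) hr
    (by simpa using fun i hi => (sub_pos.2 (hD g hg i hi)).ne')
  refine ((hsum.const_add (∑ i ∈ producers m n, A i * S i)).congr_of_eventuallyEq ?_).congr_deriv
    ?_
  · filter_upwards [eventually_update_mem hU hg j] with x hx
    rw [Yagg, ← sum_add_distrib]
    exact sum_congr rfl fun i hi =>
      mul_div_sub_eq_add_borrowing (sub_pos.2 (hD _ hx i (by simpa using hi))).ne'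
  · have hK := fderiv_single_mul_sum_weight hU hRdiff hD hRmk hg hj
    simp only [Function.update_eq_self] at hK ⊢
    rw [← hK, mul_sum, mul_sum, mul_sum, mul_sum, ← sum_sub_distrib]
    exact sum_congr rfl fun i _ => by ring

theorem exists_pos_deriv_Yagg_update_eq (hApos : ∀ i < m, 0 < A i) (hS : ∀ i < m, 0 < S i)
    (hU : IsOpen U) (hγ : ∀ g ∈ U, ∀ i : Fin m, n ≤ (i : ℕ) → 0 < g i)
    (hRdiff : DifferentiableOn ℝ R U)
    (hD : ∀ g ∈ U, ∀ i : Fin m, n ≤ (i : ℕ) → g i * A i < R g)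
    (hRmk : ∀ g ∈ U, ∑ i ∈ producers m n, borrowing (A i) (S i) (g i) (R g) = C)
    (hg : g ∈ U) (hj : n ≤ (j : ℕ)) :
    ∃ ρ > 0, deriv (fun x => Yagg m n A S R (Function.update g j x)) (g j) =
      ρ * ∑ i ∈ producers m n, (A j - A i) * weight (A i) (S i) (g i) (R g) := by
  have hgA (i : Fin m) (hi : n ≤ (i : ℕ)) : 0 < g i * A i :=
    mul_pos (hγ g hg i hi) (hApos i i.isLt)
  have hW : 0 < ∑ i ∈ producers m n, weight (A i) (S i) (g i) (R g) :=
    sum_pos (fun i hi => weight_pos (mul_pos (hgA i (mem_filter.1 hi).2) (hS i i.isLt))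
      (hD g hg i (mem_filter.1 hi).2)) ⟨j, mem_filter.2 ⟨mem_univ j, hj⟩⟩
  have hK : 0 < A j * S j * R g / (R g - g j * A j) ^ 2 :=
    div_pos (mul_pos (mul_pos (hApos j j.isLt) (hS j j.isLt)) ((hgA j hj).trans (hD g hg j hj)))
      (pow_pos (sub_pos.2 (hD g hg j hj)) 2)
  rw [← fderiv_single_mul_sum_weight hU hRdiff hD hRmk hg hj] at hK
  exact ⟨_, pos_of_mul_pos_left hK hW.le, (hasDerivAt_Yagg_update hU hRdiff hD hRmk hg hj).deriv⟩

end Model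

section Signs

variable {m n : ℕ} {A : ℕ → ℝ} {w lo hi : Fin m → ℝ}

theorem sum_producers_split (f : Fin m → ℝ) {i : Fin m} (hni : n ≤ (i : ℕ)) (hf : f i = 0) :
    ∑ t ∈ producers m n, f t =
      ∑ t ∈ univ.filter (fun t : Fin m => n ≤ (t : ℕ) ∧ (t : ℕ) < i), f t +
        ∑ t ∈ univ.filter (fun t : Fin m => (i : ℕ) < t), f t := by
  simp only [producers, sum_filter, ← sum_add_distrib]
  refine sum_congr rfl fun t _ => ?_
  rcases lt_trichotomy (t : ℕ) i with h | h | h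
  · simp [h, h.not_gt]
  · simp [Fin.ext h, hf]
  · simp [h, h.not_gt, hni.trans h.le]

theorem sum_sub_mul_neg_of_first (hA : StrictMonoOn A (Set.Iio m)) (hm : n + 1 < m)
    (hw : ∀ t : Fin m, n ≤ (t : ℕ) → 0 < w t) :
    ∑ t ∈ producers m n, (A n - A t) * w t < 0 := by
  refine sum_neg' (fun t ht => ?_)
    ⟨⟨m - 1, by omega⟩, mem_filter.2 ⟨mem_univ _, show n ≤ m - 1 by omega⟩, ?_⟩
  · have hnt := (mem_filter.1 ht).2
    exact mul_nonpos_of_nonpos_of_nonneg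
      (sub_nonpos.2 (hA.monotoneOn (by simp; omega) t.isLt hnt)) (hw t hnt).le
  · have hlt : A n < A (m - 1) := hA (show n < m by omega) (show m - 1 < m by omega) (by omega)
    exact mul_neg_of_neg_of_pos (sub_neg.2 hlt) (hw _ (show n ≤ m - 1 by omega))

theorem sum_sub_mul_pos_of_last (hA : StrictMonoOn A (Set.Iio m)) (hm : n + 1 < m)
    (hw : ∀ t : Fin m, n ≤ (t : ℕ) → 0 < w t) :
    0 < ∑ t ∈ producers m n, (A (m - 1) - A t) * w t := by
  refine sum_pos' (fun t ht => ?_) ⟨⟨n, by omega⟩, by simp, ?_⟩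
  · have hnt := (mem_filter.1 ht).2
    exact mul_nonneg
      (sub_nonneg.2 (hA.monotoneOn t.isLt (by simp; omega) (by have := t.isLt; omega)))
      (hw t hnt).le
  · have hlt : A n < A (m - 1) := hA (show n < m by omega) (show m - 1 < m by omega) (by omega)
    exact mul_pos (sub_pos.2 hlt) (hw _ le_rfl)

theorem sum_sub_mul_pos_of_gap (hA : StrictMonoOn A (Set.Iio m)) {i : Fin m}
    (hni : n < (i : ℕ)) (him : (i : ℕ) < m - 1)
    (hw : ∀ t : Fin m, n ≤ (t : ℕ) → 0 < lo t ∧ lo t < w t ∧ w t < hi t)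
    (h : (A i - A (i - 1)) / (A (m - 1) - A i) >
      (∑ t ∈ univ.filter (fun t : Fin m => (i : ℕ) < t), hi t) /
        ∑ t ∈ univ.filter (fun t : Fin m => n ≤ (t : ℕ) ∧ (t : ℕ) < i), lo t) :
    0 < ∑ t ∈ producers m n, (A i - A t) * w t := by
  set below := univ.filter (fun t : Fin m => n ≤ (t : ℕ) ∧ (t : ℕ) < i)
  set above := univ.filter (fun t : Fin m => (i : ℕ) < t)
  have hbelow : below.Nonempty := ⟨⟨n, by omega⟩, mem_filter.2 ⟨mem_univ _, le_rfl, hni⟩⟩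
  have hlo : 0 < ∑ t ∈ below, lo t :=
    sum_pos (fun t ht => (hw t (mem_filter.1 ht).2.1).1) hbelow
  have hgap : 0 < A (m - 1) - A i := sub_pos.2 (hA i.isLt (show m - 1 < m by omega) him)
  rw [gt_iff_lt, div_lt_div_iff₀ hlo hgap] at h
  have hL : (A i - A (i - 1)) * ∑ t ∈ below, lo t < ∑ t ∈ below, (A i - A t) * w t := by
    rw [mul_sum]
    refine sum_lt_sum_of_nonempty hbelow fun t ht => ?_
    obtain ⟨hnt, hti⟩ := (mem_filter.1 ht).2
    obtain ⟨hlo0, hlow, -⟩ := hw t hnt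
    have hstep : A (i - 1) < A i := hA (show (i : ℕ) - 1 < m by omega) i.isLt (by omega)
    calc (A i - A (i - 1)) * lo t < (A i - A (i - 1)) * w t :=
          mul_lt_mul_of_pos_left hlow (sub_pos.2 hstep)
      _ ≤ (A i - A t) * w t :=
          mul_le_mul_of_nonneg_right (sub_le_sub_left (hA.monotoneOn t.isLt
            (show (i : ℕ) - 1 < m by omega) (by omega)) _) (hlo0.trans hlow).le
  have hH : -((A (m - 1) - A i) * ∑ t ∈ above, hi t) ≤ ∑ t ∈ above, (A i - A t) * w t := by
    rw [mul_sum, ← sum_neg_distrib]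
    refine sum_le_sum fun t ht => ?_
    have hit := (mem_filter.1 ht).2
    obtain ⟨hlo0, hlow, hwhi⟩ := hw t (by omega)
    have : (A t - A i) * w t ≤ (A (m - 1) - A i) * hi t :=
      mul_le_mul (sub_le_sub_right (hA.monotoneOn t.isLt (show m - 1 < m by omega)
        (by have := t.isLt; omega)) _) hwhi.le (hlo0.trans hlow).le hgap.le
    linarith
  rw [sum_producers_split _ hni.le (by simp)]
  linarith

theorem sum_sub_mul_neg_of_gap (hA : StrictMonoOn A (Set.Iio m)) {i : Fin m}
    (hni : n < (i : ℕ)) (him : (i : ℕ) < m - 1)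
    (hw : ∀ t : Fin m, n ≤ (t : ℕ) → 0 < lo t ∧ lo t < w t ∧ w t < hi t)
    (h : (A i - A n) / (A (i + 1) - A i) <
      (∑ t ∈ univ.filter (fun t : Fin m => (i : ℕ) < t), lo t) /
        ∑ t ∈ univ.filter (fun t : Fin m => n ≤ (t : ℕ) ∧ (t : ℕ) < i), hi t) :
    ∑ t ∈ producers m n, (A i - A t) * w t < 0 := by
  set below := univ.filter (fun t : Fin m => n ≤ (t : ℕ) ∧ (t : ℕ) < i)
  set above := univ.filter (fun t : Fin m => (i : ℕ) < t)
  have habove : above.Nonempty := ⟨⟨m - 1, by omega⟩, mem_filter.2 ⟨mem_univ _, him⟩⟩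
  have hhi : 0 < ∑ t ∈ below, hi t :=
    sum_pos (fun t ht => by obtain ⟨h0, h1, h2⟩ := hw t (mem_filter.1 ht).2.1; linarith)
      ⟨⟨n, by omega⟩, mem_filter.2 ⟨mem_univ _, le_rfl, hni⟩⟩
  have hstep : A i < A (i + 1) := hA i.isLt (show (i : ℕ) + 1 < m by omega) (by omega)
  rw [div_lt_div_iff₀ (sub_pos.2 hstep) hhi] at h
  have hL : ∑ t ∈ below, (A i - A t) * w t ≤ (A i - A n) * ∑ t ∈ below, hi t := by
    rw [mul_sum]
    refine sum_le_sum fun t ht => ?_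
    obtain ⟨hnt, hti⟩ := (mem_filter.1 ht).2
    obtain ⟨hlo0, hlow, hwhi⟩ := hw t hnt
    exact mul_le_mul (sub_le_sub_left (hA.monotoneOn (show n < m by omega) t.isLt hnt) _)
      hwhi.le (hlo0.trans hlow).le
      (sub_nonneg.2 (hA.monotoneOn (show n < m by omega) i.isLt hni.le))
  have hH : ∑ t ∈ above, (A i - A t) * w t < -((A (i + 1) - A i) * ∑ t ∈ above, lo t) := by
    rw [mul_sum, ← sum_neg_distrib]
    refine sum_lt_sum_of_nonempty habove fun t ht => ?_
    have hit := (mem_filter.1 ht).2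
    obtain ⟨hlo0, hlow, -⟩ := hw t (by omega)
    have : (A (i + 1) - A i) * lo t < (A t - A i) * w t :=
      calc (A (i + 1) - A i) * lo t < (A (i + 1) - A i) * w t :=
            mul_lt_mul_of_pos_left hlow (sub_pos.2 hstep)
        _ ≤ (A t - A i) * w t :=
            mul_le_mul_of_nonneg_right (sub_le_sub_right (hA.monotoneOn
              (show (i : ℕ) + 1 < m by omega) t.isLt hit) _) (hlo0.trans hlow).le
    linarith
  rw [sum_producers_split _ hni.le (by simp)]
  linarith

end Signs

/-- signs of the partial derivatives of the equilibrium aggregate output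
with respect to the producers' credit limits, in the regime `R ∈ (A_{n-1}, A_n)`.
(Agents are indexed `0,…,m-1`; producers are `i ≥ n`.) -/
theorem stmt9 (m n : ℕ) (hnm : n < m)
    (A S : ℕ → ℝ)
    (hApos : ∀ i < m, 0 < A i)
    (hAmono : ∀ i j, i < j → j < m → A i < A j)
    (hS : ∀ i < m, 0 < S i)
    (U : Set (Fin m → ℝ)) (hU : IsOpen U)
    (hγ01 : ∀ g ∈ U, ∀ i : Fin m, n ≤ (i : ℕ) → g i ∈ Set.Ioo (0:ℝ) 1)
    (hmax : ∀ g ∈ U, ∀ i : Fin m, n ≤ (i : ℕ) → g i * A (i : ℕ) < A 0)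
    (R : (Fin m → ℝ) → ℝ)
    (hRdiff : DifferentiableOn ℝ R U)
    (hRrange : ∀ g ∈ U, A (n - 1) < R g ∧ R g < A n)
    -- market clearing equation defining `R` identically on `U`
    (hRmk : ∀ g ∈ U,
      (∑ i ∈ Finset.univ.filter (fun i : Fin m => n ≤ (i : ℕ)),
          g i * A (i : ℕ) * S (i : ℕ) / (R g - g i * A (i : ℕ))) =
        ∑ i ∈ Finset.univ.filter (fun i : Fin m => (i : ℕ) < n), S (i : ℕ)) :
    ∀ g ∈ U,
      -- (1) if `n < m - 1`, `∂Y/∂γₙ < 0 < ∂Y/∂γ_{m-1}`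
      (n + 1 < m →
        deriv (fun x => Yagg m n A S R (Function.update g ⟨n, hnm⟩ x)) (g ⟨n, hnm⟩) < 0 ∧
        0 < deriv (fun x => Yagg m n A S R (Function.update g ⟨m - 1, by omega⟩ x))
              (g ⟨m - 1, by omega⟩)) ∧
      -- (2) intermediate producers `n < i < m - 1`
      (∀ i : Fin m, n < (i : ℕ) → (i : ℕ) < m - 1 →
        (((A (i : ℕ) - A ((i : ℕ) - 1)) / (A (m - 1) - A (i : ℕ)) >
            (∑ t ∈ Finset.univ.filter (fun t : Fin m => (i : ℕ) < (t : ℕ)),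
              g t * A (t : ℕ) * S (t : ℕ) / (A (n - 1) - g t * A (t : ℕ)) ^ 2) /
            (∑ t ∈ Finset.univ.filter
                (fun t : Fin m => n ≤ (t : ℕ) ∧ (t : ℕ) < (i : ℕ)),
              g t * A (t : ℕ) * S (t : ℕ) / (A n - g t * A (t : ℕ)) ^ 2) →
          0 < deriv (fun x => Yagg m n A S R (Function.update g i x)) (g i)) ∧
         ((A (i : ℕ) - A n) / (A ((i : ℕ) + 1) - A (i : ℕ)) <
            (∑ t ∈ Finset.univ.filter (fun t : Fin m => (i : ℕ) < (t : ℕ)),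
              g t * A (t : ℕ) * S (t : ℕ) / (A n - g t * A (t : ℕ)) ^ 2) /
            (∑ t ∈ Finset.univ.filter
                (fun t : Fin m => n ≤ (t : ℕ) ∧ (t : ℕ) < (i : ℕ)),
              g t * A (t : ℕ) * S (t : ℕ) / (A (n - 1) - g t * A (t : ℕ)) ^ 2) →
          deriv (fun x => Yagg m n A S R (Function.update g i x)) (g i) < 0))) := by
  intro g hg
  have hA : StrictMonoOn A (Set.Iio m) := fun i hi j hj hij => hAmono i j hij hj
  have hA0 : A 0 ≤ A (n - 1) :=
    hA.monotoneOn (show 0 < m by omega) (show n - 1 < m by omega) (Nat.zero_le _)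
  have hcredit (g' : Fin m → ℝ) (hg' : g' ∈ U) (i : Fin m) (hi : n ≤ (i : ℕ)) :
      g' i * A i < A (n - 1) :=
    (hmax g' hg' i hi).trans_le hA0
  have hD : ∀ g' ∈ U, ∀ i : Fin m, n ≤ (i : ℕ) → g' i * A i < R g' := fun g' hg' i hi =>
    (hcredit g' hg' i hi).trans (hRrange g' hg').1
  have hsign (j : Fin m) (hj : n ≤ (j : ℕ)) :=
    exists_pos_deriv_Yagg_update_eq hApos hS hU (fun g' hg' i hi => (hγ01 g' hg' i hi).1) hRdiff
      hD hRmk hg hj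
  have hw (t : Fin m) (ht : n ≤ (t : ℕ)) :
      0 < weight (A t) (S t) (g t) (A n) ∧
        weight (A t) (S t) (g t) (A n) < weight (A t) (S t) (g t) (R g) ∧
        weight (A t) (S t) (g t) (R g) < weight (A t) (S t) (g t) (A (n - 1)) := by
    have hpos : 0 < g t * A t * S t :=
      mul_pos (mul_pos (hγ01 g hg t ht).1 (hApos t t.isLt)) (hS t t.isLt)
    have hR := hRrange g hg
    have hlow := hcredit g hg t ht
    exact ⟨weight_pos hpos (hlow.trans (hR.1.trans hR.2)),
      weight_strictAntiOn hpos (hD g hg t ht) (hlow.trans (hR.1.trans hR.2)) hR.2,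
      weight_strictAntiOn hpos hlow (hD g hg t ht) hR.1⟩
  refine ⟨fun hm => ⟨?_, ?_⟩, fun i hni him => ⟨fun h => ?_, fun h => ?_⟩⟩
  · obtain ⟨ρ, hρ, hY⟩ := hsign ⟨n, hnm⟩ le_rfl
    exact hY ▸ mul_neg_of_pos_of_neg hρ
      (sum_sub_mul_neg_of_first hA hm fun t ht => (hw t ht).1.trans (hw t ht).2.1)
  · obtain ⟨ρ, hρ, hY⟩ := hsign ⟨m - 1, by omega⟩ (show n ≤ m - 1 by omega)
    exact hY ▸ mul_pos hρ
      (sum_sub_mul_pos_of_last hA hm fun t ht => (hw t ht).1.trans (hw t ht).2.1)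
  · obtain ⟨ρ, hρ, hY⟩ := hsign i hni.le
    exact hY ▸ mul_pos hρ (sum_sub_mul_pos_of_gap hA hni him hw h)
  · obtain ⟨ρ, hρ, hY⟩ := hsign i hni.le
    exact hY ▸ mul_neg_of_pos_of_neg hρ (sum_sub_mul_neg_of_gap hA hni him hw h)
end

section
/- Fix an integer m ≥ 1, an index 1 ≤ h ≤ m, and parameters s_{i,0} > 0, β_i ∈ (0,1), γ_j ∈ (0,1), and positive productivities with max_i γ_i·A_i < A_1 < A_2 < ⋯ < A_m. For integers t ≥ 1 define Y_t = A_h^t·Σ_{i ≤ h} β_i^{t−1}·s_{i,0} + Σ_{j > h} β_j^{t−1}·(1−γ_j)^t·A_j^t·(A_h/(A_h−γ_j·A_j))^t·s_{j,0}. Then: (1) Y_t is increasing in A_j for each j > h; (2) ∂Y_t/∂A_h > 0 if and only if Σ_{i ≤ h} β_i^{t−1}·s_{i,0} − Σ_{j > h} ((1−γ_j)·γ_j·A_j²/(A_h−γ_j·A_j)²)·(β_j·(1−γ_j)·A_j/(A_h−γ_j·A_j))^{t−1}·s_{j,0} > 0; (3) if β_h = max_{i ≤ h} β_i > max_{j >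 h} β_j·(1−γ_j)·A_j/(A_h−γ_j·A_j) and Σ_{i ≤ h, β_i = β_h} s_{i,0} > Σ_{j > h} ((1−γ_j)·γ_j·A_j²/(A_h−γ_j·A_j)²)·s_{j,0}, then ∂Y_t/∂A_h > 0 for every t ≥ 1; (4) if β_h = max_{i ≤ h} β_i > max_{j > h} β_j·(1−γ_j)·A_j/(A_h−γ_j·A_j) and Σ_{i ≤ h} s_{i,0} < Σ_{j > h} ((1−γ_j)·γ_j·A_j²/(A_h−γ_j·A_j)²)·s_{j,0}, then ∂Y_1/∂A_h < 0 but there exists t_0 such that ∂Y_t/∂A_h ≥ 0 for all t > t_0. -/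
open scoped Classical

/-- Aggregate output at date `t ≥ 1` along the intertemporal equilibrium in the regime
where the interest rate equals `A h` at every date, as an explicit function of the
productivity vector `a` (agents `0,…,m-1`; `h` is the 0-indexed reference agent). -/
noncomputable def Yt (m h : ℕ) (β γ s : ℕ → ℝ) (t : ℕ) (a : ℕ → ℝ) : ℝ :=
  a h ^ t * (∑ i ∈ (Finset.range m).filter (fun i => i ≤ h), β i ^ (t - 1) * s i)
  + ∑ j ∈ (Finset.range m).filter (fun j => h < j),
      β j ^ (t - 1) * (1 - γ j) ^ t * a j ^ t * (a h / (a h - γ j * a j)) ^ t * s j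

/-!
The term of an agent `j > h` in `Y_t` is `β_j^(t-1) L_j(A_h)^t s_j`, where
`L_j(r) = (1 - γ_j) A_j r / (r - γ_j A_j)` is its leveraged return: increasing in `A_j` and
decreasing in the interest rate `r`, with `-L_j'(A_h) = K_j`. Hence `∂Y_t/∂A_j > 0` and
`∂Y_t/∂A_h = t A_h^(t-1) (∑_{i ≤ h} β_i^(t-1) s_i - ∑_{j > h} K_j q_j^(t-1) s_j)` with
`q_j = β_j L_j(A_h) / A_h`. The lenders' sum is at least `β_h^(t-1)` times the savings of the
lenders with `β_i = β_h`, while the borrowers' sum is at most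
`(max_j q_j)^(t-1) ∑_{j > h} K_j s_j`, and is `o(β_h^(t-1))` once every `q_j < β_h`.
-/

open Finset Filter Asymptotics

theorem hasDerivAt_sum_update {ι : Type*} [DecidableEq ι] {S : Finset ι} {j : ι} (hj : j ∈ S)
    (f : ι → ℝ → ℝ) (a : ι → ℝ) {d : ℝ} (hf : HasDerivAt (f j) d (a j)) :
    HasDerivAt (fun x => ∑ i ∈ S, f i (Function.update a j x i)) d (a j) := by
  have hsplit : (fun x => ∑ i ∈ S, f i (Function.update a j x i))
      = fun x => f j x + ∑ i ∈ S.erase j, f i (a i) := by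
    funext x
    rw [← add_sum_erase S _ hj, Function.update_self]
    congr 1
    exact sum_congr rfl fun i hi => by rw [Function.update_of_ne (ne_of_mem_erase hi)]
  rw [hsplit]
  exact hf.add_const _

namespace Finset

variable {ι : Type*}

theorem pow_mul_sum_le_sum_pow_mul {S T : Finset ι} {b s : ι → ℝ} {c : ℝ} (n : ℕ)
    (hTS : T ⊆ S) (hb : ∀ i ∈ T, b i = c) (hnn : ∀ i ∈ S, 0 ≤ b i ^ n * s i) :
    c ^ n * ∑ i ∈ T, s i ≤ ∑ i ∈ S, b i ^ n * s i :=
  calc c ^ n * ∑ i ∈ T, s i = ∑ i ∈ T, b i ^ n * s i := by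
        rw [mul_sum]
        exact sum_congr rfl fun i hi => by rw [hb i hi]
    _ ≤ ∑ i ∈ S, b i ^ n * s i := sum_le_sum_of_subset_of_nonneg hTS fun i hi _ => hnn i hi

theorem sum_mul_pow_mul_le {S : Finset ι} {a q b : ι → ℝ} {r : ℝ} (n : ℕ)
    (hq : ∀ j ∈ S, 0 ≤ q j ∧ q j ≤ r) (hab : ∀ j ∈ S, 0 ≤ a j * b j) :
    ∑ j ∈ S, a j * q j ^ n * b j ≤ r ^ n * ∑ j ∈ S, a j * b j := by
  rw [mul_sum]
  refine sum_le_sum fun j hj => ?_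
  calc a j * q j ^ n * b j = q j ^ n * (a j * b j) := by ring
    _ ≤ r ^ n * (a j * b j) :=
      mul_le_mul_of_nonneg_right (pow_le_pow_left₀ (hq j hj).1 (hq j hj).2 n) (hab j hj)

theorem isLittleO_sum_mul_pow_mul {S : Finset ι} {a q b : ι → ℝ} {r : ℝ}
    (hq : ∀ j ∈ S, |q j| < r) :
    (fun n : ℕ => ∑ j ∈ S, a j * q j ^ n * b j) =o[atTop] (fun n => r ^ n) := by
  refine IsLittleO.fun_sum fun j hj => ?_
  have hpow := isLittleO_pow_pow_of_abs_lt_left ((hq j hj).trans_le (le_abs_self r))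
  simpa only [mul_right_comm _ _ (b j)] using hpow.const_mul_left (a j * b j)

end Finset

/-- Return per unit of own wealth of an agent with productivity `a` and credit limit `γ` who
borrows at the rate `r`: the net yield `(1 - γ) a` times the leverage `r / (r - γ a)`. -/
noncomputable def leveragedReturn (γ a r : ℝ) : ℝ := (1 - γ) * a * r / (r - γ * a)

lemma leveragedReturn_pos {γ a r : ℝ} (hγ : γ < 1) (ha : 0 < a) (hr : 0 < r)
    (hd : 0 < r - γ * a) : 0 < leveragedReturn γ a r := by
  have := sub_pos.2 hγ
  unfold leveragedReturn
  positivity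

lemma hasDerivAt_leveragedReturn_left (γ : ℝ) {a r : ℝ} (hd : r - γ * a ≠ 0) :
    HasDerivAt (fun x => leveragedReturn γ x r) ((1 - γ) * r ^ 2 / (r - γ * a) ^ 2) a := by
  refine ((((hasDerivAt_id' a).const_mul (1 - γ)).mul_const r).div
    (((hasDerivAt_id' a).const_mul γ).const_sub r) hd).congr_deriv ?_
  field_simp
  ring

lemma hasDerivAt_leveragedReturn_right (γ a : ℝ) {r : ℝ} (hd : r - γ * a ≠ 0) :
    HasDerivAt (leveragedReturn γ a) (-((1 - γ) * γ * a ^ 2 / (r - γ * a) ^ 2)) r := by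
  refine (((hasDerivAt_id' r).const_mul ((1 - γ) * a)).div
    ((hasDerivAt_id' r).sub_const (γ * a)) hd).congr_deriv ?_
  field_simp
  ring

/-- `β j * leveragedReturn (γ j) (A j) (A h) / A h`: the factor by which the term of agent `j`
in `∂Y_t/∂A_h` grows from one date to the next, relative to `A h`. -/
noncomputable def relativeGrowth (β γ A : ℕ → ℝ) (h j : ℕ) : ℝ :=
  β j * (1 - γ j) * A j / (A h - γ j * A j)

/-- `-∂/∂r leveragedReturn (γ j) (A j) r` at `r = A h`. -/
noncomputable def rateSensitivity (γ A : ℕ → ℝ) (h j : ℕ) : ℝ :=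
  (1 - γ j) * γ j * A j ^ 2 / (A h - γ j * A j) ^ 2

noncomputable def lenderBorrowerGap (m h : ℕ) (β γ s A : ℕ → ℝ) (n : ℕ) : ℝ :=
  (∑ i ∈ (range m).filter (fun i => i ≤ h), β i ^ n * s i)
    - ∑ j ∈ (range m).filter (fun j => h < j),
        rateSensitivity γ A h j * relativeGrowth β γ A h j ^ n * s j

lemma Yt_eq (m h : ℕ) (β γ s : ℕ → ℝ) (t : ℕ) (a : ℕ → ℝ) :
    Yt m h β γ s t a
      = a h ^ t * ∑ i ∈ (range m).filter (fun i => i ≤ h), β i ^ (t - 1) * s i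
      + ∑ j ∈ (range m).filter (fun j => h < j),
          β j ^ (t - 1) * leveragedReturn (γ j) (a j) (a h) ^ t * s j := by
  unfold Yt leveragedReturn
  congr 1
  refine sum_congr rfl fun j _ => ?_
  rw [mul_div_assoc, mul_pow, mul_pow]
  ring

section

variable {m h : ℕ} {β γ s A : ℕ → ℝ}

lemma hasDerivAt_Yt_update_of_lt (t : ℕ) {j : ℕ} (hj : h < j) (hjm : j < m)
    (hd : A h - γ j * A j ≠ 0) :
    HasDerivAt (fun x => Yt m h β γ s t (Function.update A j x))
      (β j ^ (t - 1) * (t * leveragedReturn (γ j) (A j) (A h) ^ (t - 1) *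
        ((1 - γ j) * A h ^ 2 / (A h - γ j * A j) ^ 2)) * s j) (A j) := by
  have hmem : j ∈ (range m).filter (fun j => h < j) := mem_filter.2 ⟨mem_range.2 hjm, hj⟩
  simp only [Yt_eq, Function.update_of_ne hj.ne]
  refine HasDerivAt.const_add _ (hasDerivAt_sum_update hmem
    (fun i x => β i ^ (t - 1) * leveragedReturn (γ i) x (A h) ^ t * s i) A ?_)
  exact (((hasDerivAt_leveragedReturn_left (γ j) hd).pow t).const_mul _).mul_const _

lemma deriv_Yt_update_of_lt_pos {t j : ℕ} (ht : 1 ≤ t) (hj : h < j) (hjm : j < m)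
    (hAh : 0 < A h) (hAj : 0 < A j) (hd : 0 < A h - γ j * A j) (hβ : 0 < β j) (hγ : γ j < 1)
    (hs : 0 < s j) :
    0 < deriv (fun x => Yt m h β γ s t (Function.update A j x)) (A j) := by
  rw [(hasDerivAt_Yt_update_of_lt t hj hjm hd.ne').deriv]
  have := leveragedReturn_pos hγ hAj hAh hd
  have := sub_pos.2 hγ
  have : (0 : ℝ) < t := by exact_mod_cast ht
  positivity

lemma hasDerivAt_Yt_update_self (t : ℕ) (hd : ∀ j, h < j → j < m → A h - γ j * A j ≠ 0) :
    HasDerivAt (fun x => Yt m h β γ s t (Function.update A h x))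
      (t * A h ^ (t - 1) * lenderBorrowerGap m h β γ s A (t - 1)) (A h) := by
  have hfun : (fun x => Yt m h β γ s t (Function.update A h x)) = fun x =>
      x ^ t * (∑ i ∈ (range m).filter (fun i => i ≤ h), β i ^ (t - 1) * s i)
        + ∑ j ∈ (range m).filter (fun j => h < j),
            β j ^ (t - 1) * leveragedReturn (γ j) (A j) x ^ t * s j := by
    funext x
    rw [Yt_eq, Function.update_self]
    congr 1
    refine sum_congr rfl fun j hj => ?_
    rw [Function.update_of_ne (mem_filter.1 hj).2.ne']
  have hterm (j : ℕ) : β j ^ (t - 1) * (t * leveragedReturn (γ j) (A j) (A h) ^ (t - 1) *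
      -((1 - γ j) * γ j * A j ^ 2 / (A h - γ j * A j) ^ 2)) * s j
      = -(t * A h ^ (t - 1)) *
          (rateSensitivity γ A h j * relativeGrowth β γ A h j ^ (t - 1) * s j) := by
    have hgrowth : β j ^ (t - 1) * leveragedReturn (γ j) (A j) (A h) ^ (t - 1)
        = A h ^ (t - 1) * relativeGrowth β γ A h j ^ (t - 1) := by
      rw [← mul_pow, ← mul_pow, leveragedReturn, relativeGrowth]
      ring
    rw [rateSensitivity]
    linear_combination (-t * ((1 - γ j) * γ j * A j ^ 2 / (A h - γ j * A j) ^ 2) * s j) * hgrowth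
  rw [hfun]
  have hsum := HasDerivAt.fun_sum (u := (range m).filter (fun j => h < j)) (x := A h)
    fun j hj => (((hasDerivAt_leveragedReturn_right (γ j) (A j)
      (hd j (mem_filter.1 hj).2 (mem_range.1 (mem_filter.1 hj).1))).pow t).const_mul
        (β j ^ (t - 1))).mul_const (s j)
  refine (((hasDerivAt_pow t (A h)).mul_const _).add hsum).congr_deriv ?_
  simp only [hterm, ← mul_sum, lenderBorrowerGap]
  ring

lemma relativeGrowth_pos {j : ℕ} (hβ : 0 < β j) (hγ : γ j < 1) (hA : 0 < A j)
    (hd : 0 < A h - γ j * A j) : 0 < relativeGrowth β γ A h j := by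
  have := sub_pos.2 hγ
  unfold relativeGrowth
  positivity

lemma rateSensitivity_nonneg {j : ℕ} (hγ₀ : 0 ≤ γ j) (hγ₁ : γ j ≤ 1) :
    0 ≤ rateSensitivity γ A h j := by
  have := sub_nonneg.2 hγ₁
  unfold rateSensitivity
  positivity

lemma lenderBorrowerGap_zero : lenderBorrowerGap m h β γ s A 0 =
    (∑ i ∈ (range m).filter (fun i => i ≤ h), s i)
      - ∑ j ∈ (range m).filter (fun j => h < j), rateSensitivity γ A h j * s j := by
  simp [lenderBorrowerGap]

lemma lenderBorrowerGap_pos (hβ : ∀ i < m, 0 ≤ β i) (hs : ∀ i < m, 0 ≤ s i)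
    (hβh : 0 < β h)
    (hgrowth : ∀ j, h < j → j < m →
      0 ≤ relativeGrowth β γ A h j ∧ relativeGrowth β γ A h j ≤ β h)
    (hsens : ∀ j, h < j → j < m → 0 ≤ rateSensitivity γ A h j)
    (hshare : ∑ j ∈ (range m).filter (fun j => h < j), rateSensitivity γ A h j * s j
      < ∑ i ∈ (range m).filter (fun i => i ≤ h ∧ β i = β h), s i) (n : ℕ) :
    0 < lenderBorrowerGap m h β γ s A n := by
  have hborrowers := sum_mul_pow_mul_le (S := (range m).filter (fun j => h < j)) n
    (fun j hj => by simp only [mem_filter, mem_range] at hj; exact hgrowth j hj.2 hj.1)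
    (fun j hj => by
      simp only [mem_filter, mem_range] at hj
      exact mul_nonneg (hsens j hj.2 hj.1) (hs j hj.1))
  have hlenders := pow_mul_sum_le_sum_pow_mul (S := (range m).filter (fun i => i ≤ h))
    (T := (range m).filter (fun i => i ≤ h ∧ β i = β h)) (b := β) (s := s) n
    (fun i hi => by simp only [mem_filter] at hi ⊢; exact ⟨hi.1, hi.2.1⟩)
    (fun i hi => (mem_filter.1 hi).2.2)
    (fun i hi => by
      simp only [mem_filter, mem_range] at hi
      exact mul_nonneg (pow_nonneg (hβ i hi.1) n) (hs i hi.1))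
  have := mul_lt_mul_of_pos_left hshare (pow_pos hβh n)
  rw [lenderBorrowerGap]
  linarith

lemma eventually_lenderBorrowerGap_nonneg (hh : h < m) (hβ : ∀ i < m, 0 ≤ β i)
    (hs : ∀ i < m, 0 ≤ s i) (hsh : 0 < s h)
    (hgrowth : ∀ j, h < j → j < m → |relativeGrowth β γ A h j| < β h) :
    ∀ᶠ n in atTop, 0 ≤ lenderBorrowerGap m h β γ s A n := by
  have hsmall := (isLittleO_sum_mul_pow_mul (S := (range m).filter (fun j => h < j))
    (a := rateSensitivity γ A h) (b := s) fun j hj => by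
      simp only [mem_filter, mem_range] at hj
      exact hgrowth j hj.2 hj.1).bound hsh
  filter_upwards [hsmall] with n hn
  have hlender :
      β h ^ n * s h ≤ ∑ i ∈ (range m).filter (fun i => i ≤ h), β i ^ n * s i := by
    refine single_le_sum (f := fun i => β i ^ n * s i) (fun i hi => ?_)
      (mem_filter.2 ⟨mem_range.2 hh, le_rfl⟩)
    simp only [mem_filter, mem_range] at hi
    exact mul_nonneg (pow_nonneg (hβ i hi.1) n) (hs i hi.1)
  rw [Real.norm_eq_abs, Real.norm_of_nonneg (pow_nonneg (hβ h hh) n)] at hn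
  rw [lenderBorrowerGap]
  linarith [le_abs_self (∑ j ∈ (range m).filter (fun j => h < j),
    rateSensitivity γ A h j * relativeGrowth β γ A h j ^ n * s j)]

end

/-- monotonicity of `Y_t` in the productivities `A_j` (`j > h`), the sign
characterization of `∂Y_t/∂A_h`, and the two parameter regimes. -/
theorem stmt16 (m h : ℕ) (hh : h < m)
    (β γ s A : ℕ → ℝ)
    (hs : ∀ i < m, 0 < s i)
    (hβ : ∀ i < m, β i ∈ Set.Ioo (0:ℝ) 1)
    (hγ : ∀ i < m, γ i ∈ Set.Ioo (0:ℝ) 1)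
    (hApos : 0 < A 0)
    (hAmono : ∀ i j, i < j → j < m → A i < A j)
    (hmax : ∀ i < m, γ i * A i < A 0) :
    -- (1) `Y_t` is increasing in `A_j` for `j > h`
    (∀ t, 1 ≤ t → ∀ j, h < j → j < m →
      0 < deriv (fun x => Yt m h β γ s t (Function.update A j x)) (A j)) ∧
    -- (2) the sign characterization of `∂Y_t/∂A_h`
    (∀ t, 1 ≤ t →
      (0 < deriv (fun x => Yt m h β γ s t (Function.update A h x)) (A h) ↔
        0 < (∑ i ∈ (Finset.range m).filter (fun i => i ≤ h), β i ^ (t - 1) * s i)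
            - ∑ j ∈ (Finset.range m).filter (fun j => h < j),
                ((1 - γ j) * γ j * A j ^ 2 / (A h - γ j * A j) ^ 2) *
                  (β j * (1 - γ j) * A j / (A h - γ j * A j)) ^ (t - 1) * s j)) ∧
    -- (3) under the discount-factor dominance and a large patient-agents share,
    -- `∂Y_t/∂A_h > 0` at every date
    ((∀ i ≤ h, β i ≤ β h) →
     (∀ j, h < j → j < m → β j * (1 - γ j) * A j / (A h - γ j * A j) < β h) →
     (∑ j ∈ (Finset.range m).filter (fun j => h < j),
        ((1 - γ j) * γ j * A j ^ 2 / (A h - γ j * A j) ^ 2) * s j)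
       < ∑ i ∈ (Finset.range m).filter (fun i => i ≤ h ∧ β i = β h), s i →
     ∀ t, 1 ≤ t →
       0 < deriv (fun x => Yt m h β γ s t (Function.update A h x)) (A h)) ∧
    -- (4) with a small patient-agents share, `∂Y_1/∂A_h < 0` but `∂Y_t/∂A_h ≥ 0`
    -- eventually
    ((∀ i ≤ h, β i ≤ β h) →
     (∀ j, h < j → j < m → β j * (1 - γ j) * A j / (A h - γ j * A j) < β h) →
     (∑ i ∈ (Finset.range m).filter (fun i => i ≤ h), s i)
       < ∑ j ∈ (Finset.range m).filter (fun j => h < j),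
          ((1 - γ j) * γ j * A j ^ 2 / (A h - γ j * A j) ^ 2) * s j →
     deriv (fun x => Yt m h β γ s 1 (Function.update A h x)) (A h) < 0 ∧
     ∃ t₀ : ℕ, ∀ t, t₀ < t →
       0 ≤ deriv (fun x => Yt m h β γ s t (Function.update A h x)) (A h)) := by
  have hA0h : A 0 ≤ A h := h.eq_zero_or_pos.elim (fun h0 => h0 ▸ le_rfl) fun hpos =>
    (hAmono 0 h hpos hh).le
  have hAh : 0 < A h := hApos.trans_le hA0h
  have hd : ∀ j < m, 0 < A h - γ j * A j := fun j hjm => sub_pos.2 ((hmax j hjm).trans_le hA0h)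
  have hAj : ∀ j, h < j → j < m → 0 < A j := fun j hj hjm => hAh.trans (hAmono h j hj hjm)
  have hgrowth : ∀ j, h < j → j < m → 0 < relativeGrowth β γ A h j := fun j hj hjm =>
    relativeGrowth_pos (hβ j hjm).1 (hγ j hjm).2 (hAj j hj hjm) (hd j hjm)
  have hderiv (t : ℕ) : deriv (fun x => Yt m h β γ s t (Function.update A h x)) (A h)
      = t * A h ^ (t - 1) * lenderBorrowerGap m h β γ s A (t - 1) :=
    (hasDerivAt_Yt_update_self t fun j _ hjm => (hd j hjm).ne').deriv
  have hfactor (t : ℕ) (ht : 1 ≤ t) : 0 < (t : ℝ) * A h ^ (t - 1) := by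
    have : (0 : ℝ) < t := by exact_mod_cast ht
    positivity
  refine ⟨fun t ht j hj hjm => deriv_Yt_update_of_lt_pos ht hj hjm hAh (hAj j hj hjm) (hd j hjm)
      (hβ j hjm).1 (hγ j hjm).2 (hs j hjm),
    fun t ht => by rw [hderiv]; exact mul_pos_iff_of_pos_left (hfactor t ht),
    fun _ hdom hshare t ht => ?_, fun _ hdom hshare => ⟨?_, ?_⟩⟩
  · rw [hderiv]
    exact mul_pos (hfactor t ht) (lenderBorrowerGap_pos (fun i hi => (hβ i hi).1.le)
      (fun i hi => (hs i hi).le) (hβ h hh).1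
      (fun j hj hjm => ⟨(hgrowth j hj hjm).le, (hdom j hj hjm).le⟩)
      (fun j _ hjm => rateSensitivity_nonneg (hγ j hjm).1.le (hγ j hjm).2.le) hshare _)
  · simpa [hderiv, lenderBorrowerGap_zero, rateSensitivity] using hshare
  · obtain ⟨t₀, ht₀⟩ := (eventually_lenderBorrowerGap_nonneg hh
      (fun i hi => (hβ i hi).1.le) (fun i hi => (hs i hi).le) (hs h hh) fun j hj hjm =>
        (abs_of_pos (hgrowth j hj hjm)).trans_lt (hdom j hj hjm)).exists_forall_of_atTop
    exact ⟨t₀, fun t ht => by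
      rw [hderiv]; exact mul_nonneg (hfactor t (by omega)).le (ht₀ _ (by omega))⟩
end

section
/- Fix an integer m ≥ 1, an index 1 ≤ h ≤ m, parameters s_{i,0} > 0, β_i ∈ (0,1), γ_j ∈ (0,1), and positive productivities with max_i γ_i·A_i < A_1 < A_2 < ⋯ < A_m, and assume β_h = max_{i ≤ h} β_i > max_{j > h} β_j·(1−γ_j)·A_j/(A_h−γ_j·A_j). For t ≥ 1 define the growth rate G_{t+1} = A_h·[Σ_{i ≤ h} β_i^t·s_{i,0} + Σ_{j > h} (β_j·(1−γ_j)·A_j/(A_h−γ_j·A_j))^{t+1}·s_{j,0}/β_j] / [Σ_{i ≤ h} β_i^{t−1}·s_{i,0} + Σ_{j > h} (β_j·(1−γ_j)·A_j/(A_h−γ_j·A_j))^t·s_{j,0}/β_j]. Then lim_{t→∞} G_{t+1} = A_h·β_h, and for each j > h there exists a date t_1 such that for all t ≥ t_1 the quantity G_{t+1} is decreasing in the productivity A_j. -/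
/-!
Put `R_j = β_j (1 - γ_j) A_j / (A_h - γ_j A_j)` and `D_u = Y_{u+1} / A_h^{u+1}
= Σ_{i ≤ h} s_i β_i^u + Σ_{j > h} (s_j / β_j) R_j^{u+1}`, so that `G_{u+2} = A_h D_{u+1} / D_u`.
`D_u` is a positive combination of geometric sequences whose largest ratio is `β_h`, hence
`D_{u+1} / D_u → β_h`. The productivity `A_j` enters only through `R_j`, which is increasing in
`A_j`, and `∂G_{u+2}/∂R_j` has the sign of `(u + 2) R_j D_u - (u + 1) D_{u+1}`; this is negative
for large `u` because `R_j < β_h`.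
-/

open Filter Topology

/-- The growth rate `G_{t+1}` of the aggregate output along the intertemporal
equilibrium in the regime where the interest rate equals `a h` at every date, as an
explicit function of the productivity vector `a`. -/
noncomputable def Gt (m h : ℕ) (β γ s : ℕ → ℝ) (t : ℕ) (a : ℕ → ℝ) : ℝ :=
  a h *
    (((∑ i ∈ (Finset.range m).filter (fun i => i ≤ h), β i ^ t * s i)
      + ∑ j ∈ (Finset.range m).filter (fun j => h < j),
          (β j * (1 - γ j) * a j / (a h - γ j * a j)) ^ (t + 1) * (s j / β j)) /
     ((∑ i ∈ (Finset.range m).filter (fun i => i ≤ h), β i ^ (t - 1) * s i)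
      + ∑ j ∈ (Finset.range m).filter (fun j => h < j),
          (β j * (1 - γ j) * a j / (a h - γ j * a j)) ^ t * (s j / β j)))

theorem tendsto_sum_mul_pow_div_pow {ι : Type*} (s : Finset ι) (w g : ι → ℝ) {ρ : ℝ}
    (hρ : 0 < ρ) (hg : ∀ i ∈ s, 0 ≤ g i ∧ g i ≤ ρ) :
    Tendsto (fun u : ℕ => (∑ i ∈ s, w i * g i ^ u) / ρ ^ u) atTop
      (𝓝 (∑ i ∈ s with g i = ρ, w i)) := by
  rw [Finset.sum_filter]
  simp_rw [Finset.sum_div, mul_div_assoc, ← div_pow]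
  refine tendsto_finsetSum _ fun i hi => ?_
  split_ifs with hgi
  · simp [hgi, hρ.ne']
  · have hlt : g i / ρ < 1 := (div_lt_one hρ).2 (lt_of_le_of_ne (hg i hi).2 hgi)
    simpa using
      (tendsto_pow_atTop_nhds_zero_of_lt_one (div_nonneg (hg i hi).1 hρ.le) hlt).const_mul (w i)

theorem tendsto_sum_mul_pow_succ_div {ι : Type*} (s : Finset ι) (w g : ι → ℝ) {ρ : ℝ}
    (hρ : 0 < ρ) (hg : ∀ i ∈ s, 0 ≤ g i ∧ g i ≤ ρ) (hc : ∑ i ∈ s with g i = ρ, w i ≠ 0) :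
    Tendsto (fun u : ℕ => (∑ i ∈ s, w i * g i ^ (u + 1)) / ∑ i ∈ s, w i * g i ^ u) atTop
      (𝓝 ρ) := by
  have hlim := tendsto_sum_mul_pow_div_pow s w g hρ hg
  have h := ((hlim.comp (tendsto_add_atTop_nat 1)).div hlim hc).const_mul ρ
  rw [div_self hc, mul_one] at h
  refine h.congr fun u => ?_
  simp only [Pi.div_apply, Function.comp_apply]
  rw [pow_succ', ← div_div, div_div_div_cancel_right₀ (pow_ne_zero u hρ.ne')]
  field_simp

theorem hasDerivAt_mul_div_sub_mul {b a g x : ℝ} (hx : a - g * x ≠ 0) :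
    HasDerivAt (fun y => b * y / (a - g * y)) (b * a / (a - g * x) ^ 2) x := by
  refine (((hasDerivAt_id' x).const_mul b).fun_div
    (((hasDerivAt_id' x).const_mul g).const_sub a) hx).congr_deriv ?_
  ring

theorem deriv_const_mul_add_pow_div_add_pow_neg {φ : ℝ → ℝ} {φ' x K P Q c : ℝ} {n : ℕ}
    (hφ : HasDerivAt φ φ' x) (hK : 0 < K) (hφ' : 0 < φ') (hφx : 0 < φ x) (hc : 0 < c)
    (hD : Q + φ x ^ (n + 1) * c ≠ 0)
    (hkey : (n + 2) * φ x * (Q + φ x ^ (n + 1) * c) < (n + 1) * (P + φ x ^ (n + 2) * c)) :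
    deriv (fun y => K * ((P + φ y ^ (n + 2) * c) / (Q + φ y ^ (n + 1) * c))) x < 0 := by
  have hN := ((hφ.fun_pow (n + 2)).mul_const c).const_add P
  have hD' := ((hφ.fun_pow (n + 1)).mul_const c).const_add Q
  rw [((hN.fun_div hD' hD).const_mul K).deriv]
  refine mul_neg_of_pos_of_neg hK (div_neg_of_neg_of_pos ?_ (by positivity))
  have hfact : ((n + 2 : ℕ) * φ x ^ (n + 2 - 1) * φ' * c) * (Q + φ x ^ (n + 1) * c)
      - (P + φ x ^ (n + 2) * c) * ((n + 1 : ℕ) * φ x ^ (n + 1 - 1) * φ' * c)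
      = φ x ^ n * φ' * c *
        ((n + 2) * φ x * (Q + φ x ^ (n + 1) * c) - (n + 1) * (P + φ x ^ (n + 2) * c)) := by
    simp only [Nat.add_sub_cancel, show n + 2 - 1 = n + 1 by omega]; push_cast; ring
  rw [hfact]
  exact mul_neg_of_pos_of_neg (by positivity) (sub_neg.2 hkey)

noncomputable def leveragedRate (β γ A : ℕ → ℝ) (h j : ℕ) : ℝ :=
  β j * (1 - γ j) * A j / (A h - γ j * A j)

noncomputable def savingsRate (h : ℕ) (β γ A : ℕ → ℝ) (i : ℕ) : ℝ :=
  if i ≤ h then β i else leveragedRate β γ A h i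

noncomputable def savingsWeight (h : ℕ) (β γ s A : ℕ → ℝ) (i : ℕ) : ℝ :=
  if i ≤ h then s i else leveragedRate β γ A h i * (s i / β i)

/-- `discountedOutput m h β γ s A u = Y_{u+1} / A_h^{u+1}`. -/
noncomputable def discountedOutput (m h : ℕ) (β γ s A : ℕ → ℝ) (u : ℕ) : ℝ :=
  ∑ i ∈ Finset.range m, savingsWeight h β γ s A i * savingsRate h β γ A i ^ u

section Economy

variable {m h : ℕ} {β γ s A : ℕ → ℝ}

theorem leveragedRate_pos {j : ℕ} (hβ : 0 < β j) (hγ : γ j < 1) (hA : 0 < A j)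
    (hden : γ j * A j < A h) : 0 < leveragedRate β γ A h j := by
  have : 0 < 1 - γ j := sub_pos.2 hγ
  have : 0 < A h - γ j * A j := sub_pos.2 hden
  unfold leveragedRate
  positivity

theorem Gt_succ (u : ℕ) :
    Gt m h β γ s (u + 1) A =
      A h * (discountedOutput m h β γ s A (u + 1) / discountedOutput m h β γ s A u) := by
  have hsplit : ∀ v, discountedOutput m h β γ s A v =
      (∑ i ∈ (Finset.range m).filter (fun i => i ≤ h), β i ^ v * s i)
        + ∑ j ∈ (Finset.range m).filter (fun j => h < j),
          (β j * (1 - γ j) * A j / (A h - γ j * A j)) ^ (v + 1) * (s j / β j) := by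
    intro v
    rw [discountedOutput, ← Finset.sum_filter_add_sum_filter_not _ (fun i => i ≤ h)]
    simp only [not_le]
    congr 1 <;> refine Finset.sum_congr rfl fun i hi => ?_ <;>
      have hi := (Finset.mem_filter.1 hi).2
    · simp only [savingsWeight, savingsRate, if_pos hi]; ring
    · simp only [savingsWeight, savingsRate, if_neg (not_le.2 hi), leveragedRate]; ring
  rw [hsplit, hsplit, Gt, Nat.add_sub_cancel]

theorem discountedOutput_update {j : ℕ} (hj : h < j) (hjm : j < m) (x : ℝ) (u : ℕ) :
    discountedOutput m h β γ s (Function.update A j x) u =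
      (∑ i ∈ (Finset.range m).erase j, savingsWeight h β γ s A i * savingsRate h β γ A i ^ u)
        + (β j * (1 - γ j) * x / (A h - γ j * x)) ^ (u + 1) * (s j / β j) := by
  have hhj : h ≠ j := hj.ne
  rw [discountedOutput, ← Finset.sum_erase_add _ _ (Finset.mem_range.2 hjm)]
  congr 1
  · refine Finset.sum_congr rfl fun i hi => ?_
    simp only [savingsWeight, savingsRate, leveragedRate,
      Function.update_of_ne (Finset.ne_of_mem_erase hi), Function.update_of_ne hhj]
  · simp only [savingsWeight, savingsRate, leveragedRate, if_neg (not_le.2 hj),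
      Function.update_self, Function.update_of_ne hhj]
    ring

theorem discountedOutput_pos (hh : h < m) (hrate : ∀ i < m, 0 ≤ savingsRate h β γ A i)
    (hweight : ∀ i < m, 0 ≤ savingsWeight h β γ s A i) (hsh : 0 < s h) (hβh : 0 < β h)
    (u : ℕ) : 0 < discountedOutput m h β γ s A u := by
  refine Finset.sum_pos' (fun i hi => ?_) ⟨h, Finset.mem_range.2 hh, ?_⟩
  · have hi := Finset.mem_range.1 hi
    exact mul_nonneg (hweight i hi) (pow_nonneg (hrate i hi) u)
  · simp only [savingsWeight, savingsRate, le_refl, if_true]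
    positivity

theorem tendsto_discountedOutput_succ_div (hh : h < m)
    (hrate : ∀ i < m, 0 ≤ savingsRate h β γ A i ∧ savingsRate h β γ A i ≤ β h)
    (hweight : ∀ i < m, 0 ≤ savingsWeight h β γ s A i) (hsh : 0 < s h) (hβh : 0 < β h) :
    Tendsto (fun u => discountedOutput m h β γ s A (u + 1) / discountedOutput m h β γ s A u)
      atTop (𝓝 (β h)) := by
  refine tendsto_sum_mul_pow_succ_div _ _ _ hβh (fun i hi => hrate i (Finset.mem_range.1 hi))
    (Finset.sum_pos' (fun i hi => ?_) ⟨h, ?_, ?_⟩).ne'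
  · exact hweight i (Finset.mem_range.1 (Finset.mem_filter.1 hi).1)
  · exact Finset.mem_filter.2 ⟨Finset.mem_range.2 hh, by simp [savingsRate]⟩
  · simpa [savingsWeight] using hsh

theorem exists_deriv_Gt_update_neg {j : ℕ} {L : ℝ} (hj : h < j) (hjm : j < m) (hAh : 0 < A h)
    (hβj : 0 < β j) (hγj : γ j < 1) (hsj : 0 < s j) (hAj : 0 < A j) (hden : γ j * A j < A h)
    (hpos : ∀ u, 0 < discountedOutput m h β γ s A u)
    (hlim : Tendsto (fun u => discountedOutput m h β γ s A (u + 1) /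
      discountedOutput m h β γ s A u) atTop (𝓝 L))
    (hlt : leveragedRate β γ A h j < L) :
    ∃ t₁ : ℕ, ∀ t, t₁ ≤ t →
      deriv (fun x => Gt m h β γ s t (Function.update A j x)) (A j) < 0 := by
  set R := leveragedRate β γ A h j
  set D := discountedOutput m h β γ s A
  set ψ : ℝ → ℝ := fun x => β j * (1 - γ j) * x / (A h - γ j * x)
  set Q : ℕ → ℝ := fun u =>
    ∑ i ∈ (Finset.range m).erase j, savingsWeight h β γ s A i * savingsRate h β γ A i ^ u
  have hfactor : Tendsto (fun u : ℕ => (1 + 1 / ((u : ℝ) + 1)) * R) atTop (𝓝 R) := by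
    simpa using (tendsto_one_div_add_atTop_nhds_zero_nat.const_add 1).mul_const R
  obtain ⟨u₁, hu₁⟩ := eventually_atTop.1 (hfactor.eventually_lt hlim hlt)
  refine ⟨u₁ + 1, fun t ht => ?_⟩
  obtain ⟨u, rfl⟩ : ∃ u, t = u + 1 := ⟨t - 1, by omega⟩
  have hGt : (fun x => Gt m h β γ s (u + 1) (Function.update A j x)) =
      fun x => A h * ((Q (u + 1) + ψ x ^ (u + 2) * (s j / β j)) /
        (Q u + ψ x ^ (u + 1) * (s j / β j))) := by
    funext x
    rw [Gt_succ, discountedOutput_update hj hjm, discountedOutput_update hj hjm,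
      Function.update_of_ne hj.ne]
  have hD : ∀ v, Q v + ψ (A j) ^ (v + 1) * (s j / β j) = D v := fun v => by
    rw [← discountedOutput_update hj hjm, Function.update_eq_self]
  have hψ : HasDerivAt ψ (β j * (1 - γ j) * A h / (A h - γ j * A j) ^ 2) (A j) :=
    hasDerivAt_mul_div_sub_mul (sub_pos.2 hden).ne'
  have hγj' : 0 < 1 - γ j := sub_pos.2 hγj
  rw [hGt]
  refine deriv_const_mul_add_pow_div_add_pow_neg hψ hAh (by positivity)
    (leveragedRate_pos hβj hγj hAj hden) (by positivity) (by rw [hD]; exact (hpos u).ne') ?_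
  rw [hD, show u + 2 = u + 1 + 1 from rfl, hD]
  have hu := hu₁ u (by omega)
  rw [lt_div_iff₀ (hpos u)] at hu
  calc (u + 2) * R * D u = (u + 1) * ((1 + 1 / ((u : ℝ) + 1)) * R * D u) := by
        field_simp; ring
    _ < (u + 1) * D (u + 1) := mul_lt_mul_of_pos_left hu (by positivity)

end Economy

/-- the growth rate converges to `A_h · β_h`, and for each `j > h` it is
eventually decreasing in the productivity `A_j`. -/
theorem stmt17 (m h : ℕ) (hh : h < m)
    (β γ s A : ℕ → ℝ)
    (hs : ∀ i < m, 0 < s i)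
    (hβ : ∀ i < m, β i ∈ Set.Ioo (0:ℝ) 1)
    (hγ : ∀ i < m, γ i ∈ Set.Ioo (0:ℝ) 1)
    (hApos : 0 < A 0)
    (hAmono : ∀ i j, i < j → j < m → A i < A j)
    (hmax : ∀ i < m, γ i * A i < A 0)
    (hβmax : ∀ i ≤ h, β i ≤ β h)
    (hβgap : ∀ j, h < j → j < m →
      β j * (1 - γ j) * A j / (A h - γ j * A j) < β h) :
    Tendsto (fun t : ℕ => Gt m h β γ s t A) atTop (𝓝 (A h * β h)) ∧
    ∀ j, h < j → j < m →
      ∃ t₁ : ℕ, ∀ t, t₁ ≤ t →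
        deriv (fun x => Gt m h β γ s t (Function.update A j x)) (A j) < 0 := by
  have hA0h : A 0 ≤ A h := by
    rcases Nat.eq_zero_or_pos h with h0 | h0
    · rw [h0]
    · exact (hAmono 0 h h0 hh).le
  have hAh : 0 < A h := hApos.trans_le hA0h
  have hAk : ∀ k, h < k → k < m → 0 < A k := fun k hk hkm =>
    hApos.trans (hAmono 0 k (by omega) hkm)
  have hden : ∀ k < m, γ k * A k < A h := fun k hkm => (hmax k hkm).trans_le hA0h
  have hR : ∀ k, h < k → k < m → 0 < leveragedRate β γ A h k := fun k hk hkm =>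
    leveragedRate_pos (hβ k hkm).1 (hγ k hkm).2 (hAk k hk hkm) (hden k hkm)
  have hrate : ∀ i < m, 0 ≤ savingsRate h β γ A i ∧ savingsRate h β γ A i ≤ β h := by
    intro i hi
    unfold savingsRate
    split_ifs with hih
    · exact ⟨(hβ i hi).1.le, hβmax i hih⟩
    · exact ⟨(hR i (by omega) hi).le, (hβgap i (by omega) hi).le⟩
  have hweight : ∀ i < m, 0 ≤ savingsWeight h β γ s A i := by
    intro i hi
    unfold savingsWeight
    split_ifs with hih
    · exact (hs i hi).le
    · have := hR i (by omega) hi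
      have := (hβ i hi).1
      have := hs i hi
      positivity
  have hlim := tendsto_discountedOutput_succ_div hh hrate hweight (hs h hh) (hβ h hh).1
  refine ⟨(tendsto_add_atTop_iff_nat 1).1 ?_, fun j hj hjm => ?_⟩
  · simpa only [Gt_succ] using hlim.const_mul (A h)
  · exact exists_deriv_Gt_update_neg hj hjm hAh (hβ j hjm).1 (hγ j hjm).2 (hs j hjm)
      (hAk j hj hjm) (hden j hjm)
      (discountedOutput_pos hh (fun i hi => (hrate i hi).1) hweight (hs h hh) (hβ h hh).1)
      hlim (hβgap j hj hjm)
end
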